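/- arXiv:2107.06608 — 2 statements merged into one kernel-verified Lean document; each statement's English description precedes it below -/
import Mathlib

section
/- Let A_i ∈ ℝ^{d_i×d_{i−1}} for i = 1,…,n, define Δ_i := A_{i+1}ᵀA_{i+1} − A_i A_iᵀ for i = 1,…,n−1, and assume ‖Δ_i‖_spectral ≤ 1/(2n) for all i = 1,…,n−1. Then max_{i∈{1,…,n}} ‖A_i‖_spectral^n ≤ ‖A_{n:1}‖_spectral + 2n·√( max_{i∈{1,…,n−1}} ‖Δ_i‖_spectral ) · max_{A ∈ {I, A_1, …, A_n}} ‖A‖_spectral^{2n}, where A_{n:1} := A_n A_{n−1} ⋯ A_1 and I denotes an identity matrix. -/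
open Matrix

noncomputable section

/-- A family of matrices `A i : ℝ^{dims (i+1) × dims i}` (zero-indexed). -/
abbrev WeightFam (n : ℕ) (dims : ℕ → ℕ) : Type :=
  ∀ j : Fin n, Matrix (Fin (dims (j.val + 1))) (Fin (dims j.val)) ℝ

/-- Rectangular matrix with ones on the diagonal: equals the identity matrix whenever the
two dimensions coincide. -/
def castId (p q : ℕ) : Matrix (Fin p) (Fin q) ℝ :=
  Matrix.of fun i j => if (i : ℕ) = (j : ℕ) then 1 else 0

/-- `segProd dims A a b = A_{b-1} * ⋯ * A_a` (zero-indexed), the identity when `a = b`;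
in particular `segProd dims A 0 n = A_{n:1} = A_n ⋯ A_1` (one-indexed). -/
def segProd {n : ℕ} (dims : ℕ → ℕ) (W : WeightFam n dims) (a : ℕ) :
    (b : ℕ) → Matrix (Fin (dims b)) (Fin (dims a)) ℝ
  | 0 => castId (dims 0) (dims a)
  | b + 1 =>
      if a = b + 1 then castId (dims (b + 1)) (dims a)
      else if hb : b < n then W ⟨b, hb⟩ * segProd dims W a b else 0

/-- Multiplication of a Euclidean vector by a matrix. -/
def mulVecE {p q : ℕ} (M : Matrix (Fin p) (Fin q) ℝ) (v : EuclideanSpace ℝ (Fin q)) :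
    EuclideanSpace ℝ (Fin p) :=
  (EuclideanSpace.equiv (Fin p) ℝ).symm (M.mulVec (EuclideanSpace.equiv (Fin q) ℝ v))

/-- Spectral norm of a matrix (largest singular value), i.e. the operator norm with respect
to Euclidean norms. -/
def specNorm {p q : ℕ} (M : Matrix (Fin p) (Fin q) ℝ) : ℝ :=
  sSup {r : ℝ | ∃ v : EuclideanSpace ℝ (Fin q), ‖v‖ = 1 ∧ r = ‖mulVecE M v‖}


namespace Aux


variable {p q r : ℕ}

def clm (M : Matrix (Fin p) (Fin q) ℝ) :
    EuclideanSpace ℝ (Fin q) →L[ℝ] EuclideanSpace ℝ (Fin p) :=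
  LinearMap.toContinuousLinearMap
    { toFun := mulVecE M
      map_add' := by
        intro x y
        simp [_root_.mulVecE, Matrix.mulVec_add, map_add]
      map_smul' := by
        intro c x
        simp [_root_.mulVecE, Matrix.mulVec_smul, _root_.map_smul] }

@[simp] lemma clm_apply (M : Matrix (Fin p) (Fin q) ℝ) (v : EuclideanSpace ℝ (Fin q)) :
    clm M v = mulVecE M v := rfl

@[simp] lemma mulVecE_zero (M : Matrix (Fin p) (Fin q) ℝ) : mulVecE M 0 = 0 := by
  simp [_root_.mulVecE, Matrix.mulVec_zero, map_zero]

lemma mulVecE_mul (M : Matrix (Fin p) (Fin q) ℝ) (N : Matrix (Fin q) (Fin r) ℝ)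
    (v : EuclideanSpace ℝ (Fin r)) : mulVecE (M * N) v = mulVecE M (mulVecE N v) := by
  simp [_root_.mulVecE, Matrix.mulVec_mulVec]
  exact (Matrix.mulVec_mulVec _ _ _).symm

lemma mulVecE_add (M N : Matrix (Fin p) (Fin q) ℝ) (v : EuclideanSpace ℝ (Fin q)) :
    mulVecE (M + N) v = mulVecE M v + mulVecE N v := by
  simp [_root_.mulVecE, Matrix.add_mulVec, map_add]

lemma mulVecE_one (v : EuclideanSpace ℝ (Fin q)) : mulVecE 1 v = v := by
  simp [_root_.mulVecE, Matrix.one_mulVec]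

lemma specNorm_eq (M : Matrix (Fin p) (Fin q) ℝ) : specNorm M = ‖clm M‖ := by
  have hset : {r : ℝ | ∃ v : EuclideanSpace ℝ (Fin q), ‖v‖ = 1 ∧ r = ‖mulVecE M v‖}
      = {r : ℝ | ∃ v : EuclideanSpace ℝ (Fin q), ‖v‖ = 1 ∧ r = ‖clm M v‖} := rfl
  rw [show (specNorm M : ℝ)
      = sSup {r : ℝ | ∃ v : EuclideanSpace ℝ (Fin q), ‖v‖ = 1 ∧ r = ‖clm M v‖} from rfl]
  rcases Nat.eq_zero_or_pos q with hq | hq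
  · subst hq
    have h0 : clm M = 0 := by
      ext v i
      have : v = 0 := Subsingleton.elim _ _
      simp [this]
    have : {r : ℝ | ∃ v : EuclideanSpace ℝ (Fin 0), ‖v‖ = 1 ∧ r = ‖clm M v‖} = ∅ := by
      ext r
      simp only [Set.mem_setOf_eq, Set.mem_empty_iff_false, iff_false]
      rintro ⟨v, hv, -⟩
      have : v = 0 := Subsingleton.elim _ _
      rw [this] at hv; simp at hv
    rw [this, h0]
    simp [Real.sSup_empty]
  · have hne : ∃ v : EuclideanSpace ℝ (Fin q), ‖v‖ = 1 := by
      refine ⟨EuclideanSpace.single ⟨0, hq⟩ 1, ?_⟩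
      simp [EuclideanSpace.norm_single]
    obtain ⟨v₀, hv₀⟩ := hne
    have hSne : {r : ℝ | ∃ v : EuclideanSpace ℝ (Fin q), ‖v‖ = 1 ∧ r = ‖clm M v‖}.Nonempty :=
      ⟨‖clm M v₀‖, v₀, hv₀, rfl⟩
    have hbdd : BddAbove {r : ℝ | ∃ v : EuclideanSpace ℝ (Fin q), ‖v‖ = 1 ∧ r = ‖clm M v‖} := by
      refine ⟨‖clm M‖, ?_⟩
      rintro r ⟨v, hv, rfl⟩
      calc ‖clm M v‖ ≤ ‖clm M‖ * ‖v‖ := (clm M).le_opNorm v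
        _ = ‖clm M‖ := by rw [hv, mul_one]
    apply le_antisymm
    · apply csSup_le hSne
      rintro r ⟨v, hv, rfl⟩
      calc ‖clm M v‖ ≤ ‖clm M‖ * ‖v‖ := (clm M).le_opNorm v
        _ = ‖clm M‖ := by rw [hv, mul_one]
    · apply ContinuousLinearMap.opNorm_le_bound
      · obtain ⟨r, ⟨v, hv, rfl⟩⟩ := hSne
        exact le_csSup hbdd ⟨v, hv, rfl⟩ |>.trans' (norm_nonneg _)
      · intro x
        rcases eq_or_ne x 0 with rfl | hx
        · simp
        · have hxn : ‖x‖ ≠ 0 := norm_ne_zero_iff.mpr hx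
          have hu : ‖(‖x‖⁻¹ • x)‖ = 1 := by
            rw [norm_smul]; simp [hxn]
          have hmem : ‖clm M (‖x‖⁻¹ • x)‖ ∈
              {r : ℝ | ∃ v : EuclideanSpace ℝ (Fin q), ‖v‖ = 1 ∧ r = ‖clm M v‖} :=
            ⟨‖x‖⁻¹ • x, hu, rfl⟩
          have hle := le_csSup hbdd hmem
          have : ‖clm M x‖ = ‖x‖ * ‖clm M (‖x‖⁻¹ • x)‖ := by
            rw [_root_.map_smul, norm_smul, norm_inv, norm_norm]
            field_simp
          rw [this, mul_comm]
          exact mul_le_mul_of_nonneg_right hle (norm_nonneg x)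

lemma specNorm_nonneg (M : Matrix (Fin p) (Fin q) ℝ) : 0 ≤ specNorm M := by
  rw [specNorm_eq]; exact norm_nonneg _

lemma norm_mulVecE_le (M : Matrix (Fin p) (Fin q) ℝ) (v : EuclideanSpace ℝ (Fin q)) :
    ‖mulVecE M v‖ ≤ specNorm M * ‖v‖ := by
  rw [specNorm_eq]
  exact (clm M).le_opNorm v

lemma inner_mulVecE_transpose (M : Matrix (Fin p) (Fin q) ℝ)
    (x : EuclideanSpace ℝ (Fin p)) (y : EuclideanSpace ℝ (Fin q)) :
    (inner ℝ (mulVecE Mᵀ x) y : ℝ) = inner ℝ x (mulVecE M y) := by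
  simp only [PiLp.inner_apply, RCLike.inner_apply, starRingEnd_apply, star_trivial]
  show y ⬝ᵥ (Mᵀ *ᵥ x) = (M *ᵥ y) ⬝ᵥ x
  rw [Matrix.mulVec_transpose, dotProduct_comm, ← Matrix.dotProduct_mulVec, dotProduct_comm]

lemma inner_mulVecE_transpose' (M : Matrix (Fin p) (Fin q) ℝ)
    (x : EuclideanSpace ℝ (Fin q)) (y : EuclideanSpace ℝ (Fin p)) :
    (inner ℝ x (mulVecE Mᵀ y) : ℝ) = inner ℝ (mulVecE M x) y := by
  rw [real_inner_comm, inner_mulVecE_transpose, real_inner_comm]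

/-- fact (2): ⟪w, (A Aᵀ) w⟫ = ‖Aᵀ w‖². -/
lemma inner_mulVecE_self_transpose (M : Matrix (Fin p) (Fin q) ℝ)
    (w : EuclideanSpace ℝ (Fin p)) :
    (inner ℝ w (mulVecE (M * Mᵀ) w) : ℝ) = ‖mulVecE Mᵀ w‖ ^ 2 := by
  rw [mulVecE_mul, ← inner_mulVecE_transpose, real_inner_self_eq_norm_sq]

/-- fact (1): ⟪w, (Aᵀ A) w⟫ = ‖A w‖². -/
lemma inner_mulVecE_transpose_self (M : Matrix (Fin p) (Fin q) ℝ)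
    (w : EuclideanSpace ℝ (Fin q)) :
    (inner ℝ w (mulVecE (Mᵀ * M) w) : ℝ) = ‖mulVecE M w‖ ^ 2 := by
  have := inner_mulVecE_self_transpose Mᵀ w
  rwa [Matrix.transpose_transpose] at this

lemma specNorm_transpose_le (M : Matrix (Fin p) (Fin q) ℝ) :
    specNorm Mᵀ ≤ specNorm M := by
  have key : ∀ v : EuclideanSpace ℝ (Fin p), ‖mulVecE Mᵀ v‖ ≤ specNorm M * ‖v‖ := by
    intro v
    set x := mulVecE Mᵀ v with hx
    rcases eq_or_lt_of_le (norm_nonneg x) with h0 | h0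
    · rw [← h0]; exact mul_nonneg (specNorm_nonneg M) (norm_nonneg v)
    · have h1 : ‖x‖ ^ 2 = inner ℝ v (mulVecE M x) := by
        rw [← inner_mulVecE_transpose, ← hx, real_inner_self_eq_norm_sq]
      have h2 : (inner ℝ v (mulVecE M x) : ℝ) ≤ ‖v‖ * ‖mulVecE M x‖ := real_inner_le_norm _ _
      have h3 : ‖mulVecE M x‖ ≤ specNorm M * ‖x‖ := norm_mulVecE_le M x
      have h4 : ‖x‖ ^ 2 ≤ ‖v‖ * (specNorm M * ‖x‖) := by
        calc ‖x‖ ^ 2 = inner ℝ v (mulVecE M x) := h1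
          _ ≤ ‖v‖ * ‖mulVecE M x‖ := h2
          _ ≤ ‖v‖ * (specNorm M * ‖x‖) := by
              exact mul_le_mul_of_nonneg_left h3 (norm_nonneg v)
      nlinarith [norm_nonneg v]
  rw [specNorm_eq Mᵀ]
  exact ContinuousLinearMap.opNorm_le_bound _ (specNorm_nonneg M) key

lemma specNorm_transpose (M : Matrix (Fin p) (Fin q) ℝ) :
    specNorm Mᵀ = specNorm M := by
  refine le_antisymm (specNorm_transpose_le M) ?_
  have := specNorm_transpose_le Mᵀ
  rwa [Matrix.transpose_transpose] at this

lemma specNorm_zero_dim (M : Matrix (Fin p) (Fin q) ℝ) (hq : q = 0) : specNorm M = 0 := by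
  subst hq
  rw [specNorm_eq]
  have h0 : clm M = 0 := by
    ext v i
    have : v = 0 := Subsingleton.elim _ _
    simp [this]
  rw [h0]; simp

lemma exists_attains (M : Matrix (Fin p) (Fin q) ℝ) (hq : 0 < q) :
    ∃ v : EuclideanSpace ℝ (Fin q), ‖v‖ = 1 ∧ ‖mulVecE M v‖ = specNorm M := by
  have hv₀ : ‖(EuclideanSpace.single (⟨0, hq⟩ : Fin q) (1:ℝ))‖ = 1 := by
    simp [EuclideanSpace.norm_single]
  have hc : IsCompact (Metric.sphere (0 : EuclideanSpace ℝ (Fin q)) 1) := isCompact_sphere _ _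
  have hcont : ContinuousOn (fun v => ‖clm M v‖) (Metric.sphere (0 : EuclideanSpace ℝ (Fin q)) 1) :=
    ((clm M).continuous.norm).continuousOn
  have hmem₀ : (EuclideanSpace.single (⟨0, hq⟩ : Fin q) (1:ℝ)) ∈
      Metric.sphere (0 : EuclideanSpace ℝ (Fin q)) 1 := by
    rw [mem_sphere_zero_iff_norm]; exact hv₀
  obtain ⟨v, hvmem, hmax⟩ := hc.exists_isMaxOn ⟨_, hmem₀⟩ hcont
  have hv1 : ‖v‖ = 1 := mem_sphere_zero_iff_norm.mp hvmem
  refine ⟨v, hv1, ?_⟩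
  have hbdd : BddAbove {r : ℝ | ∃ u : EuclideanSpace ℝ (Fin q), ‖u‖ = 1 ∧ r = ‖mulVecE M u‖} := by
    refine ⟨‖clm M‖, ?_⟩
    rintro r ⟨u, hu, rfl⟩
    calc ‖mulVecE M u‖ = ‖clm M u‖ := rfl
      _ ≤ ‖clm M‖ * ‖u‖ := (clm M).le_opNorm u
      _ = ‖clm M‖ := by rw [hu, mul_one]
  have hne : {r : ℝ | ∃ u : EuclideanSpace ℝ (Fin q), ‖u‖ = 1 ∧ r = ‖mulVecE M u‖}.Nonempty :=
    ⟨‖mulVecE M v‖, v, hv1, rfl⟩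
  refine le_antisymm (le_csSup hbdd ⟨v, hv1, rfl⟩) ?_
  apply csSup_le hne
  rintro r ⟨u, hu, rfl⟩
  exact hmax (by simpa [mem_sphere_zero_iff_norm] using hu)

lemma sqrt_add_le {x y : ℝ} (hx : 0 ≤ x) (hy : 0 ≤ y) :
    Real.sqrt (x + y) ≤ Real.sqrt x + Real.sqrt y := by
  have h1 : x + y ≤ (Real.sqrt x + Real.sqrt y) ^ 2 := by
    nlinarith [Real.sq_sqrt hx, Real.sq_sqrt hy, Real.sqrt_nonneg x, Real.sqrt_nonneg y,
      mul_nonneg (Real.sqrt_nonneg x) (Real.sqrt_nonneg y)]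
  calc Real.sqrt (x + y) ≤ Real.sqrt ((Real.sqrt x + Real.sqrt y) ^ 2) := Real.sqrt_le_sqrt h1
    _ = Real.sqrt x + Real.sqrt y := Real.sqrt_sq (by positivity)

lemma pow_sub_le' {a b c : ℝ} (hb : 0 ≤ b) (hba : b ≤ a) (hac : a ≤ c) (hc : 1 ≤ c) :
    ∀ n : ℕ, a ^ n - b ^ n ≤ n * (a - b) * c ^ n := by
  intro n
  induction n with
  | zero => simp
  | succ n ih =>
    have ha : 0 ≤ a := hb.trans hba
    have hc0 : (0:ℝ) ≤ c := by linarith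
    have hbn : b ^ n ≤ a ^ n := pow_le_pow_left₀ hb hba n
    have hbn0 : 0 ≤ b ^ n := pow_nonneg hb n
    have han : a ^ n ≤ c ^ n := pow_le_pow_left₀ ha hac n
    have hcn : 0 ≤ c ^ n := pow_nonneg hc0 n
    have key : a ^ (n+1) - b ^ (n+1) = a * (a ^ n - b ^ n) + (a - b) * b ^ n := by ring
    have h1 : a * (a ^ n - b ^ n) ≤ c * (n * (a - b) * c ^ n) := by
      have : a * (a ^ n - b ^ n) ≤ c * (a ^ n - b ^ n) :=
        mul_le_mul_of_nonneg_right hac (by linarith)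
      refine this.trans (mul_le_mul_of_nonneg_left ih hc0)
    have h2 : (a - b) * b ^ n ≤ (a - b) * c ^ n :=
      mul_le_mul_of_nonneg_left (pow_le_pow_left₀ hb (hba.trans hac) n) (by linarith)
    have h3 : c * (n * (a - b) * c ^ n) + (a - b) * c ^ n ≤ (n+1 : ℝ) * (a - b) * c ^ (n+1) := by
      have hab : 0 ≤ a - b := by linarith
      have e : (n+1 : ℝ) * (a - b) * c ^ (n+1) - (c * (n * (a - b) * c ^ n) + (a - b) * c ^ n)
          = (a - b) * c ^ n * (c - 1) := by ring
      nlinarith [mul_nonneg (mul_nonneg hab hcn) (show (0:ℝ) ≤ c - 1 by linarith)]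
    push_cast
    linarith [key, h1, h2, h3]


lemma castId_self (p : ℕ) : castId p p = (1 : Matrix (Fin p) (Fin p) ℝ) := by
  ext i j
  simp [castId, Matrix.one_apply, Fin.val_eq_val]

lemma segProd_succ {n : ℕ} (dims : ℕ → ℕ) (A : WeightFam n dims) (k : ℕ) (hk : k < n) :
    segProd dims A 0 (k+1) = A ⟨k, hk⟩ * segProd dims A 0 k := by
  rw [segProd]
  rw [if_neg (by omega), dif_pos hk]

lemma sqrt_le_self' {x : ℝ} (hx : 1 ≤ x) : Real.sqrt x ≤ x := by
  nlinarith [Real.sq_sqrt (show (0:ℝ) ≤ x by linarith), Real.sqrt_nonneg x]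

end Aux


set_option maxHeartbeats 4000000 in
/-- Lemma A.2 of the paper: if the Gram mismatches
`Δ_i = A_{i+1}ᵀ A_{i+1} - A_i A_iᵀ` all have spectral norm at most `1/(2n)`, then
`max_i ‖A_i‖ₛ^n ≤ ‖A_{n:1}‖ₛ + 2n·√(max_i ‖Δ_i‖ₛ) · max_{A∈{I,A_1,…,A_n}} ‖A‖ₛ^{2n}`
(the identity having spectral norm `1`). -/
theorem approximately_balanced_spectral_norm_bound {n : ℕ} (dims : ℕ → ℕ)
    (A : WeightFam n dims)
    (hΔ : ∀ (j : ℕ) (hj : j + 1 < n),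
      specNorm ((A ⟨j + 1, hj⟩)ᵀ * A ⟨j + 1, hj⟩ -
          A ⟨j, Nat.lt_of_succ_lt hj⟩ * (A ⟨j, Nat.lt_of_succ_lt hj⟩)ᵀ) ≤
        1 / (2 * (n : ℝ))) :
    sSup {r : ℝ | ∃ i : Fin n, r = specNorm (A i) ^ n} ≤
      specNorm (segProd dims A 0 n) +
        2 * (n : ℝ) *
          Real.sqrt (sSup {r : ℝ | ∃ (j : ℕ) (hj : j + 1 < n),
            r = specNorm ((A ⟨j + 1, hj⟩)ᵀ * A ⟨j + 1, hj⟩ -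
              A ⟨j, Nat.lt_of_succ_lt hj⟩ * (A ⟨j, Nat.lt_of_succ_lt hj⟩)ᵀ)}) *
          (max 1 (sSup {r : ℝ | ∃ i : Fin n, r = specNorm (A i)})) ^ (2 * n) := by
  classical
  rcases Nat.eq_zero_or_pos n with hn0 | hn
  · subst hn0
    have h1 : {r : ℝ | ∃ i : Fin 0, r = specNorm (A i) ^ 0} = ∅ := by
      ext r
      simp only [Set.mem_setOf_eq, Set.mem_empty_iff_false, iff_false]
      rintro ⟨i, -⟩
      exact i.elim0
    rw [h1, Real.sSup_empty]
    have h2 := Aux.specNorm_nonneg (segProd dims A 0 0)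
    have h3 : (2 : ℝ) * ((0:ℕ) : ℝ) = 0 := by norm_num
    push_cast
    nlinarith [Real.sqrt_nonneg (sSup {r : ℝ | ∃ (j : ℕ) (hj : j + 1 < 0),
      r = specNorm ((A ⟨j + 1, hj⟩)ᵀ * A ⟨j + 1, hj⟩ -
        A ⟨j, Nat.lt_of_succ_lt hj⟩ * (A ⟨j, Nat.lt_of_succ_lt hj⟩)ᵀ)})]
  -- main case : 0 < n
  set ΔSet : Set ℝ := {r : ℝ | ∃ (j : ℕ) (hj : j + 1 < n),
      r = specNorm ((A ⟨j + 1, hj⟩)ᵀ * A ⟨j + 1, hj⟩ -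
        A ⟨j, Nat.lt_of_succ_lt hj⟩ * (A ⟨j, Nat.lt_of_succ_lt hj⟩)ᵀ)} with hΔSet
  set D : ℝ := sSup ΔSet with hDdef
  set S1 : ℝ := sSup {r : ℝ | ∃ i : Fin n, r = specNorm (A i)} with hS1def
  set Mx : ℝ := max 1 S1 with hMxdef
  set P : ℝ := specNorm (segProd dims A 0 n) with hPdef
  have hP0 : 0 ≤ P := Aux.specNorm_nonneg _
  have hMx1 : (1:ℝ) ≤ Mx := le_max_left _ _
  have hMx0 : (0:ℝ) ≤ Mx := by linarith
  have hbddS : BddAbove {r : ℝ | ∃ i : Fin n, r = specNorm (A i)} := by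
    have he : {r : ℝ | ∃ i : Fin n, r = specNorm (A i)}
        = Set.range (fun i : Fin n => specNorm (A i)) := by
      ext r; simp [eq_comm, Set.range]
    rw [he]
    exact (Set.finite_range _).bddAbove
  have hiM : ∀ i : Fin n, specNorm (A i) ≤ Mx := fun i =>
    (le_csSup hbddS ⟨i, rfl⟩).trans (le_max_right 1 S1)
  have hbddD : BddAbove ΔSet := by
    refine ⟨1/(2*(n:ℝ)), ?_⟩
    rintro r ⟨j, hj, rfl⟩
    exact hΔ j hj
  have hDge : ∀ (j : ℕ) (hj : j + 1 < n),
      specNorm ((A ⟨j + 1, hj⟩)ᵀ * A ⟨j + 1, hj⟩ -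
        A ⟨j, Nat.lt_of_succ_lt hj⟩ * (A ⟨j, Nat.lt_of_succ_lt hj⟩)ᵀ) ≤ D :=
    fun j hj => le_csSup hbddD ⟨j, hj, rfl⟩
  have hD0 : 0 ≤ D := by
    by_cases hne : ΔSet.Nonempty
    · obtain ⟨r, j, hj, hr⟩ := hne
      have := le_csSup hbddD (show r ∈ ΔSet from ⟨j, hj, hr⟩)
      have h2 : 0 ≤ r := hr ▸ Aux.specNorm_nonneg _
      linarith
    · rw [Set.not_nonempty_iff_eq_empty] at hne
      rw [hDdef, hne, Real.sSup_empty]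
  have hD2n : 2 * (n:ℝ) * D ≤ 1 := by
    have hnpos : (0:ℝ) < 2 * n := by positivity
    by_cases hne : ΔSet.Nonempty
    · have hle : D ≤ 1/(2*(n:ℝ)) := by
        apply csSup_le hne
        rintro r ⟨j, hj, rfl⟩
        exact hΔ j hj
      calc 2 * (n:ℝ) * D ≤ 2 * (n:ℝ) * (1/(2*(n:ℝ))) := by
            exact mul_le_mul_of_nonneg_left hle (by positivity)
        _ = 1 := by field_simp
    · rw [Set.not_nonempty_iff_eq_empty] at hne
      rw [hDdef, hne, Real.sSup_empty]
      norm_num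
  -- one-step comparison of squared spectral norms
  have hstep1 : ∀ (j : ℕ) (hj : j + 1 < n),
      specNorm (A ⟨j+1, hj⟩) ^ 2 ≤ specNorm (A ⟨j, Nat.lt_of_succ_lt hj⟩) ^ 2 + D := by
    intro j hj
    rcases Nat.eq_zero_or_pos (dims (j+1)) with h0 | hpos
    · rw [Aux.specNorm_zero_dim (A ⟨j+1, hj⟩) h0]
      have := Aux.specNorm_nonneg (A ⟨j, Nat.lt_of_succ_lt hj⟩)
      nlinarith
    · obtain ⟨u, hu1, hu2⟩ := Aux.exists_attains (A ⟨j+1, hj⟩) hpos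
      set B := A ⟨j+1, hj⟩ with hB
      set C := A ⟨j, Nat.lt_of_succ_lt hj⟩ with hC
      have e1 : specNorm B ^ 2 = inner ℝ u (mulVecE (Bᵀ * B) u) := by
        rw [← hu2, Aux.inner_mulVecE_transpose_self]
      have e2 : (inner ℝ u (mulVecE (Bᵀ * B) u) : ℝ)
          = inner ℝ u (mulVecE (C * Cᵀ) u) + inner ℝ u (mulVecE (Bᵀ * B - C * Cᵀ) u) := by
        conv_lhs => rw [show Bᵀ * B = C * Cᵀ + (Bᵀ * B - C * Cᵀ) by abel]
        rw [Aux.mulVecE_add, inner_add_right]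
      have e4 : (inner ℝ u (mulVecE (C * Cᵀ) u) : ℝ) = ‖mulVecE Cᵀ u‖ ^ 2 :=
        Aux.inner_mulVecE_self_transpose C u
      have e5 : ‖mulVecE Cᵀ u‖ ≤ specNorm C := by
        calc ‖mulVecE Cᵀ u‖ ≤ specNorm Cᵀ * ‖u‖ := Aux.norm_mulVecE_le _ _
          _ = specNorm C := by rw [Aux.specNorm_transpose, hu1, mul_one]
      have e6 : (inner ℝ u (mulVecE (Bᵀ * B - C * Cᵀ) u) : ℝ) ≤ D := by
        have h1 : |(inner ℝ u (mulVecE (Bᵀ * B - C * Cᵀ) u) : ℝ)|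
            ≤ ‖u‖ * ‖mulVecE (Bᵀ * B - C * Cᵀ) u‖ := abs_real_inner_le_norm _ _
        have h2 : ‖mulVecE (Bᵀ * B - C * Cᵀ) u‖ ≤ specNorm (Bᵀ * B - C * Cᵀ) * ‖u‖ :=
          Aux.norm_mulVecE_le _ _
        have h3 : specNorm (Bᵀ * B - C * Cᵀ) ≤ D := hDge j hj
        have h4 := abs_nonneg (inner ℝ u (mulVecE (Bᵀ * B - C * Cᵀ) u) : ℝ)
        have h5 := le_abs_self (inner ℝ u (mulVecE (Bᵀ * B - C * Cᵀ) u) : ℝ)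
        rw [hu1] at h1 h2
        nlinarith [Aux.specNorm_nonneg (Bᵀ * B - C * Cᵀ)]
      have e7 : ‖mulVecE Cᵀ u‖ ^ 2 ≤ specNorm C ^ 2 := by
        have := norm_nonneg (mulVecE Cᵀ u)
        nlinarith
      calc specNorm B ^ 2 = inner ℝ u (mulVecE (Bᵀ * B) u) := e1
        _ = inner ℝ u (mulVecE (C * Cᵀ) u) + inner ℝ u (mulVecE (Bᵀ * B - C * Cᵀ) u) := e2
        _ ≤ ‖mulVecE Cᵀ u‖ ^ 2 + D := by rw [e4]; linarith
        _ ≤ specNorm C ^ 2 + D := by linarith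
  -- chain comparison
  have hchain : ∀ (j : ℕ) (hj : j < n),
      specNorm (A ⟨j, hj⟩) ^ 2 ≤ specNorm (A ⟨0, hn⟩) ^ 2 + (j : ℝ) * D := by
    intro j
    induction j with
    | zero =>
      intro hj
      have he : (⟨0, hj⟩ : Fin n) = ⟨0, hn⟩ := rfl
      rw [he]
      push_cast
      norm_num
    | succ j ih =>
      intro hj
      have h1 := hstep1 j hj
      have h2 := ih (Nat.lt_of_succ_lt hj)
      push_cast
      linarith
  -- reduce to a single index
  refine csSup_le ⟨specNorm (A ⟨0, hn⟩) ^ n, ⟨0, hn⟩, rfl⟩ ?_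
  rintro r ⟨i, rfl⟩
  set σ : ℝ := specNorm (A ⟨0, hn⟩) with hσdef
  have hσ0 : 0 ≤ σ := Aux.specNorm_nonneg _
  have hσM : σ ≤ Mx := hiM _
  have hAi0 : 0 ≤ specNorm (A i) := Aux.specNorm_nonneg _
  have hAiM : specNorm (A i) ≤ Mx := hiM i
  have hi2 : specNorm (A i) ^ 2 ≤ σ ^ 2 + (n:ℝ) * D := by
    have h1 := hchain i.val i.isLt
    have he : (⟨i.val, i.isLt⟩ : Fin n) = i := Fin.eta i i.isLt
    rw [he] at h1
    have h2 : ((i:ℕ) : ℝ) * D ≤ (n:ℝ) * D := by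
      have : ((i:ℕ) : ℝ) ≤ (n:ℝ) := by exact_mod_cast (le_of_lt i.isLt)
      exact mul_le_mul_of_nonneg_right this hD0
    linarith
  have hMxpow1 : (1:ℝ) ≤ Mx ^ (2*n) := one_le_pow₀ hMx1
  by_cases hcase : σ ^ 2 ≤ (n:ℝ) * D
  · -- small top singular value: everything is tiny
    have h1 : specNorm (A i) ^ 2 ≤ 2 * ((n:ℝ) * D) := by linarith
    have h2nD : 2 * ((n:ℝ) * D) ≤ 1 := by linarith [hD2n]
    have h4 : (specNorm (A i) ^ n) ^ 2 ≤ 2 * ((n:ℝ) * D) := by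
      have he : (specNorm (A i) ^ n) ^ 2 = (specNorm (A i) ^ 2) ^ n := by ring
      rw [he]
      calc (specNorm (A i) ^ 2) ^ n ≤ (specNorm (A i) ^ 2) ^ 1 :=
            pow_le_pow_of_le_one (by positivity) (by nlinarith) (by omega)
        _ = specNorm (A i) ^ 2 := pow_one _
        _ ≤ 2 * ((n:ℝ) * D) := h1
    have h3 : specNorm (A i) ^ n ≤ Real.sqrt (2 * ((n:ℝ) * D)) := by
      calc specNorm (A i) ^ n
          = Real.sqrt ((specNorm (A i) ^ n) ^ 2) := (Real.sqrt_sq (by positivity)).symm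
        _ ≤ Real.sqrt (2 * ((n:ℝ) * D)) := Real.sqrt_le_sqrt h4
    have h5 : Real.sqrt (2 * ((n:ℝ) * D)) ≤ 2 * (n:ℝ) * Real.sqrt D := by
      rw [show (2:ℝ) * ((n:ℝ) * D) = (2 * (n:ℝ)) * D by ring,
        Real.sqrt_mul (by positivity) D]
      have h6 : Real.sqrt (2 * (n:ℝ)) ≤ 2 * (n:ℝ) := by
        apply Aux.sqrt_le_self'
        have : (1:ℝ) ≤ (n:ℝ) := by exact_mod_cast hn
        linarith
      exact mul_le_mul_of_nonneg_right h6 (Real.sqrt_nonneg D)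
    have h7 : 2 * (n:ℝ) * Real.sqrt D ≤ 2 * (n:ℝ) * Real.sqrt D * Mx ^ (2*n) := by
      have h8 : (0:ℝ) ≤ 2 * (n:ℝ) * Real.sqrt D := by positivity
      nlinarith
    linarith [h3.trans (h5.trans h7)]
  · -- main case: σ² > nD
    push_neg at hcase
    have hσpos : 0 < σ := by nlinarith
    have hd0pos : 0 < dims 0 := by
      rcases Nat.eq_zero_or_pos (dims 0) with h0 | h
      · exfalso
        have := Aux.specNorm_zero_dim (A ⟨0, hn⟩) h0
        rw [← hσdef] at this
        linarith
      · exact h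
    obtain ⟨v, hv1, hvσ⟩ := Aux.exists_attains (A ⟨0, hn⟩) hd0pos
    obtain ⟨w, hwdef⟩ : ∃ w : ∀ k : ℕ, EuclideanSpace ℝ (Fin (dims k)),
        ∀ k, w k = mulVecE (segProd dims A 0 k) v :=
      ⟨fun k => mulVecE (segProd dims A 0 k) v, fun k => rfl⟩
    obtain ⟨a, hadef⟩ : ∃ a : ℕ → ℝ, ∀ k, a k = ‖w k‖ ^ 2 :=
      ⟨fun k => ‖w k‖ ^ 2, fun k => rfl⟩
    have hak0 : ∀ k, 0 ≤ a k := fun k => (hadef k).symm ▸ sq_nonneg ‖w k‖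
    have hwsucc : ∀ (k : ℕ) (hk : k < n), w (k+1) = mulVecE (A ⟨k, hk⟩) (w k) := by
      intro k hk
      rw [hwdef (k+1), hwdef k, Aux.segProd_succ dims A k hk, Aux.mulVecE_mul]
    have hw0 : w 0 = v := by
      rw [hwdef 0, show segProd dims A 0 0 = castId (dims 0) (dims 0) from rfl,
        Aux.castId_self, Aux.mulVecE_one]
    have ha0 : a 0 = 1 := by
      rw [hadef 0, hw0, hv1]; norm_num
    have ha1 : a 1 = σ ^ 2 := by
      rw [hadef 1, hwsucc 0 hn, hw0, hvσ]
    -- the key recursion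
    have hrec : ∀ k, k + 2 ≤ n →
        a (k+1) ^ 2 ≤ a (k+2) * a k + D * a (k+1) * a k := by
      intro k hk2
      have hk1 : k + 1 < n := by omega
      have hk0 : k < n := by omega
      have hw2 : w (k+2) = mulVecE (A ⟨k+1, hk1⟩) (w (k+1)) := hwsucc (k+1) hk1
      have hw1 : w (k+1) = mulVecE (A ⟨k, hk0⟩) (w k) := hwsucc k hk0
      set B := A ⟨k+1, hk1⟩ with hB
      set C := A ⟨k, hk0⟩ with hC
      set u : EuclideanSpace ℝ (Fin (dims (k+1))) := w (k+1) with hudef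
      have e1 : a (k+2) = inner ℝ u (mulVecE (Bᵀ * B) u) := by
        rw [hadef (k+2), hw2, ← Aux.inner_mulVecE_transpose_self]
      have e2 : (inner ℝ u (mulVecE (Bᵀ * B) u) : ℝ)
          = inner ℝ u (mulVecE (C * Cᵀ) u) + inner ℝ u (mulVecE (Bᵀ * B - C * Cᵀ) u) := by
        conv_lhs => rw [show Bᵀ * B = C * Cᵀ + (Bᵀ * B - C * Cᵀ) by abel]
        rw [Aux.mulVecE_add, inner_add_right]
      have e4 : (inner ℝ u (mulVecE (C * Cᵀ) u) : ℝ) = ‖mulVecE Cᵀ u‖ ^ 2 :=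
        Aux.inner_mulVecE_self_transpose C u
      have hua : ‖u‖ ^ 2 = a (k+1) := by rw [hadef (k+1)]
      have e6 : -(D * a (k+1)) ≤ (inner ℝ u (mulVecE (Bᵀ * B - C * Cᵀ) u) : ℝ) := by
        have h1 : |(inner ℝ u (mulVecE (Bᵀ * B - C * Cᵀ) u) : ℝ)|
            ≤ ‖u‖ * ‖mulVecE (Bᵀ * B - C * Cᵀ) u‖ := abs_real_inner_le_norm _ _
        have h2 : ‖mulVecE (Bᵀ * B - C * Cᵀ) u‖ ≤ specNorm (Bᵀ * B - C * Cᵀ) * ‖u‖ :=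
          Aux.norm_mulVecE_le _ _
        have h3 : specNorm (Bᵀ * B - C * Cᵀ) ≤ D := hDge k hk1
        have h5 := neg_abs_le (inner ℝ u (mulVecE (Bᵀ * B - C * Cᵀ) u) : ℝ)
        nlinarith [norm_nonneg u, norm_nonneg (mulVecE (Bᵀ * B - C * Cᵀ) u),
          Aux.specNorm_nonneg (Bᵀ * B - C * Cᵀ)]
      have e7 : a (k+1) ≤ ‖mulVecE Cᵀ u‖ * ‖w k‖ := by
        have h1 : a (k+1) = (inner ℝ u u : ℝ) := by
          rw [real_inner_self_eq_norm_sq, hua]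
        have h2 : (inner ℝ u u : ℝ) = inner ℝ u (mulVecE C (w k)) := by
          nth_rewrite 2 [hw1]
          rfl
        have h3 : (inner ℝ u (mulVecE C (w k)) : ℝ) = inner ℝ (mulVecE Cᵀ u) (w k) :=
          (Aux.inner_mulVecE_transpose C u (w k)).symm
        rw [h1, h2, h3]
        exact real_inner_le_norm _ _
      have e8 : a (k+1) ^ 2 ≤ ‖mulVecE Cᵀ u‖ ^ 2 * a k := by
        have hwk : a k = ‖w k‖ ^ 2 := hadef k
        rw [hwk]
        nlinarith [hak0 (k+1), norm_nonneg (mulVecE Cᵀ u), norm_nonneg (w k), e7]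
      have e9 : ‖mulVecE Cᵀ u‖ ^ 2 - D * a (k+1) ≤ a (k+2) := by
        rw [e1, e2, e4]
        linarith
      nlinarith [mul_le_mul_of_nonneg_right e9 (hak0 k), e8, hak0 k, hak0 (k+1)]
    -- positivity + ratio lower bound, by induction
    have hQ : ∀ k, k + 1 ≤ n → 0 < a k ∧ (σ ^ 2 - (k:ℝ) * D) * a k ≤ a (k+1) := by
      intro k
      induction k with
      | zero =>
        intro _
        rw [ha0, ha1]
        norm_num
      | succ k ih =>
        intro h
        obtain ⟨hpos, hratio⟩ := ih (by omega)
        have hkn : ((k:ℕ) : ℝ) ≤ (n:ℝ) := by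
          exact_mod_cast Nat.le_of_lt (by omega : k < n)
        have hfac : 0 < σ ^ 2 - (k:ℝ) * D := by nlinarith
        have ha1pos : 0 < a (k+1) := lt_of_lt_of_le (mul_pos hfac hpos) hratio
        refine ⟨ha1pos, ?_⟩
        have hr := hrec k (by omega)
        push_cast
        nlinarith [mul_le_mul_of_nonneg_right hratio (le_of_lt ha1pos), hpos, hak0 (k+2)]
    -- power lower bound
    have hfin : ∀ k, k ≤ n → (σ ^ 2 - (n:ℝ) * D) ^ k ≤ a k := by
      intro k
      induction k with
      | zero => intro _; rw [ha0]; norm_num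
      | succ k ih =>
        intro h
        obtain ⟨hpos, hratio⟩ := hQ k (by omega)
        have h1 := ih (by omega)
        have h2 : (0:ℝ) ≤ σ ^ 2 - (n:ℝ) * D := by linarith
        have hkn : ((k:ℕ) : ℝ) ≤ (n:ℝ) := by exact_mod_cast Nat.le_of_succ_le h
        have h3 : σ ^ 2 - (n:ℝ) * D ≤ σ ^ 2 - (k:ℝ) * D := by nlinarith
        calc (σ ^ 2 - (n:ℝ) * D) ^ (k+1)
            = (σ ^ 2 - (n:ℝ) * D) * (σ ^ 2 - (n:ℝ) * D) ^ k := by ring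
          _ ≤ (σ ^ 2 - (n:ℝ) * D) * a k := mul_le_mul_of_nonneg_left h1 h2
          _ ≤ (σ ^ 2 - (k:ℝ) * D) * a k := mul_le_mul_of_nonneg_right h3 (hak0 k)
          _ ≤ a (k+1) := hratio
    have hnD0 : (0:ℝ) ≤ σ ^ 2 - (n:ℝ) * D := by linarith
    have hP2 : (σ ^ 2 - (n:ℝ) * D) ^ n ≤ P ^ 2 := by
      have h1 : ‖w n‖ ≤ P := by
        calc ‖w n‖ = ‖mulVecE (segProd dims A 0 n) v‖ := by rw [hwdef n]
          _ ≤ specNorm (segProd dims A 0 n) * ‖v‖ := Aux.norm_mulVecE_le _ _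
          _ = P := by rw [hv1, mul_one, hPdef]
      calc (σ ^ 2 - (n:ℝ) * D) ^ n ≤ a n := hfin n le_rfl
        _ = ‖w n‖ ^ 2 := (hadef n)
        _ ≤ P ^ 2 := by nlinarith [norm_nonneg (w n)]
    have hMx2 : (1:ℝ) ≤ Mx ^ 2 := by nlinarith
    have hσMx2 : σ ^ 2 ≤ Mx ^ 2 := by nlinarith
    -- upper bound on σ^{2n}
    have e2 : σ ^ (2*n) ≤ P ^ 2 + (n:ℝ) * ((n:ℝ) * D) * Mx ^ (2*n) := by
      have key := Aux.pow_sub_le' (a := σ ^ 2) (b := σ ^ 2 - (n:ℝ) * D) (c := Mx ^ 2)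
        hnD0 (by linarith [mul_nonneg (Nat.cast_nonneg (α := ℝ) n) hD0]) hσMx2 hMx2 n
      have hd : σ ^ 2 - (σ ^ 2 - (n:ℝ) * D) = (n:ℝ) * D := by ring
      rw [hd] at key
      rw [pow_mul σ 2 n, pow_mul Mx 2 n]
      linarith [hP2, key]
    -- upper bound on σ_i^{2n} in terms of σ^{2n}
    have e1 : specNorm (A i) ^ (2*n) ≤ σ ^ (2*n) + (n:ℝ) * ((n:ℝ) * D) * Mx ^ (2*n) := by
      have hMxn0 : (0:ℝ) ≤ (Mx ^ 2) ^ n := by positivity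
      by_cases hcmp : specNorm (A i) ^ 2 ≤ σ ^ 2
      · have h1 : (specNorm (A i) ^ 2) ^ n ≤ (σ ^ 2) ^ n :=
          pow_le_pow_left₀ (by positivity) hcmp n
        have h2 : (0:ℝ) ≤ (n:ℝ) * ((n:ℝ) * D) * Mx ^ (2*n) := by
          have := mul_nonneg (Nat.cast_nonneg (α := ℝ) n) hD0
          have := mul_nonneg (Nat.cast_nonneg (α := ℝ) n) this
          nlinarith [pow_nonneg hMx0 (2*n)]
        rw [pow_mul, pow_mul]
        linarith
      · push_neg at hcmp
        have hAiMx2 : specNorm (A i) ^ 2 ≤ Mx ^ 2 := by nlinarith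
        have key := Aux.pow_sub_le' (a := specNorm (A i) ^ 2) (b := σ ^ 2) (c := Mx ^ 2)
          (by positivity) (le_of_lt hcmp) hAiMx2 hMx2 n
        have hb : specNorm (A i) ^ 2 - σ ^ 2 ≤ (n:ℝ) * D := by linarith [hi2]
        have h3 : (n:ℝ) * (specNorm (A i) ^ 2 - σ ^ 2) * (Mx ^ 2) ^ n
            ≤ (n:ℝ) * ((n:ℝ) * D) * (Mx ^ 2) ^ n := by
          have hn0 : (0:ℝ) ≤ (n:ℝ) := Nat.cast_nonneg n
          exact mul_le_mul_of_nonneg_right (mul_le_mul_of_nonneg_left hb hn0) hMxn0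
        rw [pow_mul, pow_mul, pow_mul]
        linarith
    -- combine and take square roots
    set Q : ℝ := (n:ℝ) * ((n:ℝ) * D) * Mx ^ (2*n) with hQdef
    have hQ0 : 0 ≤ Q := by
      have h1 := mul_nonneg (Nat.cast_nonneg (α := ℝ) n) hD0
      have h2 := mul_nonneg (Nat.cast_nonneg (α := ℝ) n) h1
      exact mul_nonneg h2 (pow_nonneg hMx0 (2*n))
    have hcomb : specNorm (A i) ^ (2*n) ≤ P ^ 2 + (Q + Q) := by linarith
    have hsq : (specNorm (A i) ^ n) ^ 2 = specNorm (A i) ^ (2*n) := by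
      rw [← pow_mul, mul_comm]
    have hQQ : Q + Q ≤ (2 * (n:ℝ) * Real.sqrt D * Mx ^ (2*n)) ^ 2 := by
      have hs : (2 * (n:ℝ) * Real.sqrt D * Mx ^ (2*n)) ^ 2
          = 4 * (n:ℝ)^2 * D * (Mx ^ (2*n))^2 := by
        rw [mul_pow, mul_pow, mul_pow, Real.sq_sqrt hD0]
        ring
      rw [hs]
      have hx1 : (1:ℝ) ≤ Mx ^ (2*n) := hMxpow1
      have hx2 : Mx ^ (2*n) ≤ (Mx ^ (2*n)) ^ 2 := by nlinarith
      have hn2D : (0:ℝ) ≤ (n:ℝ)^2 * D := by positivity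
      have hQform : Q = (n:ℝ)^2 * D * Mx ^ (2*n) := by rw [hQdef]; ring
      rw [hQform]
      nlinarith
    calc specNorm (A i) ^ n
        = Real.sqrt ((specNorm (A i) ^ n) ^ 2) := (Real.sqrt_sq (by positivity)).symm
      _ ≤ Real.sqrt (P ^ 2 + (Q + Q)) := by
          apply Real.sqrt_le_sqrt
          rw [hsq]
          exact hcomb
      _ ≤ Real.sqrt (P ^ 2) + Real.sqrt (Q + Q) := Aux.sqrt_add_le (by positivity) (by linarith)
      _ = P + Real.sqrt (Q + Q) := by rw [Real.sqrt_sq hP0]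
      _ ≤ P + 2 * (n:ℝ) * Real.sqrt D * Mx ^ (2*n) := by
          have := Real.sqrt_le_sqrt hQQ
          rw [Real.sqrt_sq (by positivity)] at this
          linarith
end
end

section
/- For the square-loss deep linear training loss f with d_n = 1, any weight setting θ ∈ ℝ^d with weight matrices W_1,…,W_n satisfies: (i) ‖∇²f(θ)‖_spectral ≤ n · max_{J⊆{1,…,n}, |J| = n−1} ∏_{j∈J} ‖W_j‖_F² + 2n·‖W_{n:1} − Λ_yx‖_F · max_{J⊆{1,…,n}, |J| = n−2} ∏_{j∈J} ‖W_j‖_F; and (ii) ‖∇f(θ)‖₂ ≤ √n · ‖W_{n:1} − Λ_yx‖_F · max_{J⊆{1,…,n}, |J| = n−1} ∏_{j∈J} ‖W_j‖_F, where an empty product equals one. -/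
open scoped RealInnerProductSpace
open Matrix

noncomputable section

/-- Frobenius norm of a matrix. -/
def frobNorm {p q : ℕ} (M : Matrix (Fin p) (Fin q) ℝ) : ℝ :=
  Real.sqrt (∑ i, ∑ j, M i j ^ 2)

/-- A weight setting is balanced when `W_{j+1}ᵀ W_{j+1} = W_j W_jᵀ` for all adjacent
pairs of layers. -/
def IsBalanced {n : ℕ} (dims : ℕ → ℕ) (W : WeightFam n dims) : Prop :=
  ∀ (j : ℕ) (hj : j + 1 < n),
    (W ⟨j + 1, hj⟩)ᵀ * W ⟨j + 1, hj⟩ =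
      W ⟨j, Nat.lt_of_succ_lt hj⟩ * (W ⟨j, Nat.lt_of_succ_lt hj⟩)ᵀ

/-- The Hessian of `f` at `x`, regarded as a quadratic form, evaluated at `v`. -/
def hessQ {E : Type*} [NormedAddCommGroup E] [InnerProductSpace ℝ E] [CompleteSpace E]
    (f : E → ℝ) (x v : E) : ℝ :=
  ⟪v, fderiv ℝ (gradient f) x v⟫

/-- The iterates of gradient descent with step size `η` started at `θ0`. -/
def gdIter {E : Type*} [NormedAddCommGroup E] [InnerProductSpace ℝ E] [CompleteSpace E]
    (f : E → ℝ) (η : ℝ) (θ0 : E) : ℕ → E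
  | 0 => θ0
  | k + 1 => gdIter f η θ0 k - η • gradient f (gdIter f η θ0 k)

namespace DLSL

lemma frobNorm_nonneg {p q : ℕ} (M : Matrix (Fin p) (Fin q) ℝ) : 0 ≤ frobNorm M :=
  Real.sqrt_nonneg _

lemma frobNorm_sq {p q : ℕ} (M : Matrix (Fin p) (Fin q) ℝ) :
    frobNorm M ^ 2 = ∑ i, ∑ j, M i j ^ 2 :=
  Real.sq_sqrt (by positivity)

lemma frobNorm_zero {p q : ℕ} : frobNorm (0 : Matrix (Fin p) (Fin q) ℝ) = 0 := by
  simp [frobNorm]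

lemma double_cs {p q : ℕ} (A B : Matrix (Fin p) (Fin q) ℝ) :
    (∑ i, ∑ j, A i j * B i j) ^ 2 ≤
      (∑ i, ∑ j, A i j ^ 2) * (∑ i, ∑ j, B i j ^ 2) := by
  have h := Finset.sum_mul_sq_le_sq_mul_sq Finset.univ
    (fun ij : Fin p × Fin q => A ij.1 ij.2) (fun ij : Fin p × Fin q => B ij.1 ij.2)
  simpa [Fintype.sum_prod_type] using h

lemma frob_inner_abs_le {p q : ℕ} (A B : Matrix (Fin p) (Fin q) ℝ) :
    |∑ i, ∑ j, A i j * B i j| ≤ frobNorm A * frobNorm B := by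
  have h := double_cs A B
  have h2 : |∑ i, ∑ j, A i j * B i j| = Real.sqrt ((∑ i, ∑ j, A i j * B i j) ^ 2) :=
    (Real.sqrt_sq_eq_abs _).symm
  rw [h2, frobNorm, frobNorm, ← Real.sqrt_mul (by positivity)]
  exact Real.sqrt_le_sqrt h

lemma frobNorm_mul_le {p q r : ℕ} (M : Matrix (Fin p) (Fin q) ℝ)
    (N : Matrix (Fin q) (Fin r) ℝ) : frobNorm (M * N) ≤ frobNorm M * frobNorm N := by
  rw [frobNorm, frobNorm, frobNorm, ← Real.sqrt_mul (by positivity)]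
  apply Real.sqrt_le_sqrt
  have hentry : ∀ (i : Fin p) (j : Fin r), ((M * N) i j) ^ 2 ≤
      (∑ k, M i k ^ 2) * (∑ k, N k j ^ 2) := by
    intro i j
    rw [Matrix.mul_apply]
    exact Finset.sum_mul_sq_le_sq_mul_sq Finset.univ _ _
  calc ∑ i, ∑ j, ((M * N) i j) ^ 2 ≤ ∑ i, ∑ j, (∑ k, M i k ^ 2) * (∑ k, N k j ^ 2) := by
        apply Finset.sum_le_sum; intro i _; apply Finset.sum_le_sum; intro j _
        exact hentry i j
    _ = (∑ i, ∑ k, M i k ^ 2) * (∑ k, ∑ j, N k j ^ 2) := by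
        rw [Finset.sum_comm (s := Finset.univ) (t := Finset.univ)
          (f := fun k j => N k j ^ 2)]
        rw [← Finset.sum_mul_sum]
    _ = _ := rfl

lemma frobNorm_add_le {p q : ℕ} (A B : Matrix (Fin p) (Fin q) ℝ) :
    frobNorm (A + B) ≤ frobNorm A + frobNorm B := by
  have hexp : ∑ i, ∑ j, (A + B) i j ^ 2 =
      (∑ i, ∑ j, A i j ^ 2) + 2 * (∑ i, ∑ j, A i j * B i j) + (∑ i, ∑ j, B i j ^ 2) := by
    rw [Finset.mul_sum, ← Finset.sum_add_distrib, ← Finset.sum_add_distrib]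
    apply Finset.sum_congr rfl; intro i _
    rw [Finset.mul_sum, ← Finset.sum_add_distrib, ← Finset.sum_add_distrib]
    apply Finset.sum_congr rfl; intro j _
    simp [Matrix.add_apply]; ring
  have hc : |∑ i, ∑ j, A i j * B i j| ≤ frobNorm A * frobNorm B := frob_inner_abs_le A B
  have h1 : ∑ i, ∑ j, (A + B) i j ^ 2 ≤ (frobNorm A + frobNorm B) ^ 2 := by
    rw [hexp]
    have hA : ∑ i, ∑ j, A i j ^ 2 = frobNorm A ^ 2 := (frobNorm_sq A).symm
    have hB : ∑ i, ∑ j, B i j ^ 2 = frobNorm B ^ 2 := (frobNorm_sq B).symm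
    rw [hA, hB]
    have := abs_le.1 hc
    nlinarith [this.2]
  calc frobNorm (A + B) = Real.sqrt (∑ i, ∑ j, (A + B) i j ^ 2) := rfl
    _ ≤ Real.sqrt ((frobNorm A + frobNorm B) ^ 2) := Real.sqrt_le_sqrt h1
    _ = |frobNorm A + frobNorm B| := Real.sqrt_sq_eq_abs _
    _ = frobNorm A + frobNorm B := abs_of_nonneg (by have := frobNorm_nonneg A; have := frobNorm_nonneg B; linarith)

lemma castId_sq (p : ℕ) : castId p p = (1 : Matrix (Fin p) (Fin p) ℝ) := by
  ext i j
  simp [castId, Matrix.one_apply, Fin.val_eq_val]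

lemma segProd_zero {n : ℕ} (dims : ℕ → ℕ) (W : WeightFam n dims) :
    segProd dims W 0 0 = castId (dims 0) (dims 0) := rfl

lemma segProd_succ {n : ℕ} (dims : ℕ → ℕ) (W : WeightFam n dims) (b : ℕ) (hb : b < n) :
    segProd dims W 0 (b + 1) = W ⟨b, hb⟩ * segProd dims W 0 b := by
  rw [segProd]
  rw [if_neg (by omega : ¬ (0 = b + 1)), dif_pos hb]

/-- coefficient matrices of the expansion of `segProd dims (W + t • V) 0 b` in powers of `t` -/
def pertProd {n : ℕ} (dims : ℕ → ℕ) (W V : WeightFam n dims) :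
    (b : ℕ) → ℕ → Matrix (Fin (dims b)) (Fin (dims 0)) ℝ
  | 0, k => if k = 0 then castId (dims 0) (dims 0) else 0
  | b + 1, k =>
      if hb : b < n then
        W ⟨b, hb⟩ * pertProd dims W V b k +
          (if k = 0 then 0 else V ⟨b, hb⟩ * pertProd dims W V b (k - 1))
      else 0

lemma pertProd_eq_zero {n : ℕ} (dims : ℕ → ℕ) (W V : WeightFam n dims) :
    ∀ b k, b < k → pertProd dims W V b k = 0 := by
  intro b
  induction b with
  | zero => intro k hk; rw [pertProd, if_neg (by omega)]
  | succ b ih =>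
      intro k hk
      rw [pertProd]
      by_cases hb : b < n
      · rw [dif_pos hb, ih k (by omega), if_neg (by omega), ih (k-1) (by omega)]
        simp
      · rw [dif_neg hb]

lemma pertProd_zero_eq {n : ℕ} (dims : ℕ → ℕ) (W V : WeightFam n dims) :
    ∀ b, b ≤ n → pertProd dims W V b 0 = segProd dims W 0 b := by
  intro b
  induction b with
  | zero => intro _; rfl
  | succ b ih =>
      intro hb
      rw [pertProd, dif_pos (by omega : b < n), if_pos rfl, add_zero,
        ih (by omega), segProd_succ dims W b (by omega)]

lemma segProd_expand {n : ℕ} (dims : ℕ → ℕ) (W V : WeightFam n dims) (t : ℝ) :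
    ∀ b, b ≤ n →
      segProd dims (fun j => W j + t • V j) 0 b =
        ∑ k ∈ Finset.range (b + 1), t ^ k • pertProd dims W V b k := by
  intro b
  induction b with
  | zero =>
      intro _
      rw [Finset.sum_range_one]
      simp [segProd_zero, pertProd]
  | succ b ih =>
      intro hb
      have hbn : b < n := by omega
      rw [segProd_succ dims _ b hbn, ih (by omega)]
      have hrhs : ∑ k ∈ Finset.range (b + 2), t ^ k • pertProd dims W V (b + 1) k =
          (∑ k ∈ Finset.range (b + 2), t ^ k • (W ⟨b, hbn⟩ * pertProd dims W V b k)) +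
          ∑ k ∈ Finset.range (b + 2), t ^ k •
            (if k = 0 then 0 else V ⟨b, hbn⟩ * pertProd dims W V b (k - 1)) := by
        rw [← Finset.sum_add_distrib]
        apply Finset.sum_congr rfl; intro k _
        rw [pertProd, dif_pos hbn, smul_add]
      rw [hrhs]
      have h1 : ∑ k ∈ Finset.range (b + 2), t ^ k • (W ⟨b, hbn⟩ * pertProd dims W V b k) =
          W ⟨b, hbn⟩ * ∑ k ∈ Finset.range (b + 1), t ^ k • pertProd dims W V b k := by
        rw [Finset.sum_range_succ, pertProd_eq_zero dims W V b (b+1) (by omega)]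
        simp [Matrix.mul_sum, Matrix.mul_smul]
      have h2 : ∑ k ∈ Finset.range (b + 2), t ^ k •
            (if k = 0 then 0 else V ⟨b, hbn⟩ * pertProd dims W V b (k - 1)) =
          (t • V ⟨b, hbn⟩) * ∑ k ∈ Finset.range (b + 1), t ^ k • pertProd dims W V b k := by
        rw [Finset.sum_range_succ' (fun k => t ^ k •
            (if k = 0 then 0 else V ⟨b, hbn⟩ * pertProd dims W V b (k - 1)))]
        simp only [if_neg (Nat.succ_ne_zero _), if_true, smul_zero, add_zero,
          Nat.add_sub_cancel, if_pos]
        rw [Matrix.mul_sum]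
        apply Finset.sum_congr rfl; intro k _
        rw [Matrix.smul_mul, Matrix.mul_smul, smul_smul, pow_succ]
        ring_nf
      rw [h1, h2, ← Matrix.add_mul]
def idxSet (n b : ℕ) : Finset (Fin n) := Finset.univ.filter (fun i => i.val < b)

lemma idxSet_top {n : ℕ} : idxSet n n = Finset.univ := by
  ext i; simp [idxSet, i.isLt]

lemma not_mem_idxSet {n b : ℕ} (hb : b < n) : (⟨b, hb⟩ : Fin n) ∉ idxSet n b := by
  simp [idxSet]

lemma idxSet_succ {n b : ℕ} (hb : b < n) :
    idxSet n (b + 1) = insert ⟨b, hb⟩ (idxSet n b) := by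
  ext i
  simp only [idxSet, Finset.mem_filter, Finset.mem_univ, true_and, Finset.mem_insert,
    Fin.ext_iff]
  omega

lemma idxSet_one {n : ℕ} (hn : 1 ≤ n) : idxSet n 1 = {⟨0, hn⟩} := by
  ext i
  simp only [idxSet, Finset.mem_filter, Finset.mem_univ, true_and, Finset.mem_singleton,
    Nat.lt_one_iff, Fin.ext_iff]

section Bounds

variable {n : ℕ} {dims : ℕ → ℕ} (W V : WeightFam n dims)

/-- first-order bound sum -/
def bnd1 (b : ℕ) : ℝ :=
  ∑ j ∈ idxSet n b, frobNorm (V j) * ∏ i ∈ (idxSet n b).erase j, frobNorm (W i)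

/-- second-order bound sum (each unordered pair counted twice) -/
def bnd2 (b : ℕ) : ℝ :=
  ∑ j ∈ idxSet n b, frobNorm (V j) *
    ∑ k ∈ (idxSet n b).erase j, frobNorm (V k) *
      ∏ i ∈ ((idxSet n b).erase j).erase k, frobNorm (W i)

lemma bnd1_nonneg (b : ℕ) : 0 ≤ bnd1 W V b := by
  apply Finset.sum_nonneg; intro j _
  exact mul_nonneg (frobNorm_nonneg _) (Finset.prod_nonneg fun i _ => frobNorm_nonneg _)

lemma bnd2_nonneg (b : ℕ) : 0 ≤ bnd2 W V b := by
  apply Finset.sum_nonneg; intro j _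
  refine mul_nonneg (frobNorm_nonneg _) (Finset.sum_nonneg fun k _ => ?_)
  exact mul_nonneg (frobNorm_nonneg _) (Finset.prod_nonneg fun i _ => frobNorm_nonneg _)

lemma pertProd_bounds :
    ∀ b, 1 ≤ b → b ≤ n →
      frobNorm (pertProd dims W V b 0) ≤ ∏ i ∈ idxSet n b, frobNorm (W i) ∧
      frobNorm (pertProd dims W V b 1) ≤ bnd1 W V b ∧
      frobNorm (pertProd dims W V b 2) ≤ bnd2 W V b / 2 := by
  intro b hb1
  induction b, hb1 using Nat.le_induction with
  | base =>
      intro hn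
      have h0 : (0 : ℕ) < n := hn
      have hp0 : pertProd dims W V 1 0 = W ⟨0, h0⟩ := by
        rw [pertProd, dif_pos h0, if_pos rfl, add_zero]
        show W ⟨0, h0⟩ * pertProd dims W V 0 0 = _
        rw [pertProd, if_pos rfl, castId_sq, Matrix.mul_one]
      have hp1 : pertProd dims W V 1 1 = V ⟨0, h0⟩ := by
        rw [pertProd, dif_pos h0, if_neg one_ne_zero]
        have : pertProd dims W V 0 1 = 0 := pertProd_eq_zero dims W V 0 1 (by omega)
        rw [this, Matrix.mul_zero, zero_add]
        show V ⟨0, h0⟩ * pertProd dims W V 0 0 = _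
        rw [pertProd, if_pos rfl, castId_sq, Matrix.mul_one]
      have hp2 : pertProd dims W V 1 2 = 0 := pertProd_eq_zero dims W V 1 2 (by omega)
      rw [hp0, hp1, hp2, idxSet_one h0]
      refine ⟨by simp, ?_, ?_⟩
      · unfold bnd1
        rw [idxSet_one h0]
        simp
      · unfold bnd2
        rw [idxSet_one h0]
        simp [frobNorm_zero]
  | succ b hb ih =>
      intro hbn
      have hbn' : b < n := by omega
      obtain ⟨ih0, ih1, ih2⟩ := ih (by omega)
      set x : Fin n := ⟨b, hbn'⟩ with hxdef
      have hx : x ∉ idxSet n b := not_mem_idxSet hbn'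
      have hins : idxSet n (b + 1) = insert x (idxSet n b) := idxSet_succ hbn'
      have wnn : ∀ i : Fin n, 0 ≤ frobNorm (W i) := fun i => frobNorm_nonneg _
      have vnn : ∀ i : Fin n, 0 ≤ frobNorm (V i) := fun i => frobNorm_nonneg _
      have prodnn : ∀ s : Finset (Fin n), 0 ≤ ∏ i ∈ s, frobNorm (W i) :=
        fun s => Finset.prod_nonneg fun i _ => wnn i
      -- unfolded recursions
      have hrec0 : pertProd dims W V (b+1) 0 = W x * pertProd dims W V b 0 := by
        rw [pertProd, dif_pos hbn', if_pos rfl, add_zero]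
      have hrec1 : pertProd dims W V (b+1) 1 =
          W x * pertProd dims W V b 1 + V x * pertProd dims W V b 0 := by
        rw [pertProd, dif_pos hbn', if_neg one_ne_zero]
      have hrec2 : pertProd dims W V (b+1) 2 =
          W x * pertProd dims W V b 2 + V x * pertProd dims W V b 1 := by
        rw [pertProd, dif_pos hbn', if_neg (by omega)]
      -- bound for products with a fixed left factor
      have hmulW : ∀ {pq : ℕ} (M : Matrix (Fin (dims b)) (Fin pq) ℝ) (c : ℝ),
          frobNorm M ≤ c → frobNorm (W x * M) ≤ frobNorm (W x) * c := by
        intro pq M c hMc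
        exact le_trans (frobNorm_mul_le _ _)
          (mul_le_mul_of_nonneg_left hMc (wnn x))
      have hmulV : ∀ {pq : ℕ} (M : Matrix (Fin (dims b)) (Fin pq) ℝ) (c : ℝ),
          frobNorm M ≤ c → frobNorm (V x * M) ≤ frobNorm (V x) * c := by
        intro pq M c hMc
        exact le_trans (frobNorm_mul_le _ _)
          (mul_le_mul_of_nonneg_left hMc (vnn x))
      -- bnd1 recursion
      have hb1rec : bnd1 W V (b+1) =
          frobNorm (V x) * ∏ i ∈ idxSet n b, frobNorm (W i) +
            frobNorm (W x) * bnd1 W V b := by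
        unfold bnd1
        rw [hins, Finset.sum_insert hx, Finset.erase_insert hx]
        congr 1
        rw [Finset.mul_sum]
        apply Finset.sum_congr rfl; intro j hj
        have hjx : x ≠ j := fun h => hx (h ▸ hj)
        rw [Finset.erase_insert_of_ne hjx]
        rw [Finset.prod_insert (fun h => hx (Finset.erase_subset _ _ h))]
        ring
      -- bnd2 recursion
      have hb2rec : bnd2 W V (b+1) =
          2 * (frobNorm (V x) * bnd1 W V b) + frobNorm (W x) * bnd2 W V b := by
        unfold bnd2
        rw [hins, Finset.sum_insert hx, Finset.erase_insert hx]
        have hinner : ∀ j ∈ idxSet n b,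
            frobNorm (V j) * ∑ k ∈ (insert x (idxSet n b)).erase j, frobNorm (V k) *
              ∏ i ∈ ((insert x (idxSet n b)).erase j).erase k, frobNorm (W i) =
            frobNorm (V j) * (frobNorm (V x) * ∏ i ∈ (idxSet n b).erase j, frobNorm (W i)) +
            frobNorm (W x) * (frobNorm (V j) * ∑ k ∈ (idxSet n b).erase j, frobNorm (V k) *
              ∏ i ∈ ((idxSet n b).erase j).erase k, frobNorm (W i)) := by
          intro j hj
          have hjx : x ≠ j := fun h => hx (h ▸ hj)
          have hxe : x ∉ (idxSet n b).erase j := fun h => hx (Finset.erase_subset _ _ h)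
          rw [Finset.erase_insert_of_ne hjx, Finset.sum_insert hxe,
            Finset.erase_insert hxe]
          have : ∀ k ∈ (idxSet n b).erase j,
              frobNorm (V k) * ∏ i ∈ ((insert x ((idxSet n b).erase j))).erase k,
                frobNorm (W i) =
              frobNorm (W x) * (frobNorm (V k) *
                ∏ i ∈ (((idxSet n b).erase j)).erase k, frobNorm (W i)) := by
            intro k hk
            have hkx : x ≠ k := fun h => hxe (h ▸ hk)
            rw [Finset.erase_insert_of_ne hkx,
              Finset.prod_insert (fun h => hxe (Finset.erase_subset _ _ h))]
            ring
          rw [Finset.sum_congr rfl this, ← Finset.mul_sum]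
          ring
        rw [Finset.sum_congr rfl hinner, Finset.sum_add_distrib, ← Finset.mul_sum]
        have : ∑ j ∈ idxSet n b, frobNorm (V j) *
            (frobNorm (V x) * ∏ i ∈ (idxSet n b).erase j, frobNorm (W i)) =
            frobNorm (V x) * bnd1 W V b := by
          unfold bnd1
          rw [Finset.mul_sum]
          apply Finset.sum_congr rfl; intro j _; ring
        rw [this]
        unfold bnd1 bnd2 at *
        ring
      refine ⟨?_, ?_, ?_⟩
      · rw [hrec0, hins, Finset.prod_insert hx]
        exact hmulW _ _ ih0
      · rw [hrec1, hb1rec]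
        refine le_trans (frobNorm_add_le _ _) ?_
        have h1 := hmulW _ _ ih1
        have h2 := hmulV _ _ ih0
        linarith
      · rw [hrec2, hb2rec]
        refine le_trans (frobNorm_add_le _ _) ?_
        have h1 := hmulW _ _ ih2
        have h2 := hmulV _ _ ih1
        linarith

end Bounds
lemma opNorm_le_of_quadratic {E : Type*} [NormedAddCommGroup E] [InnerProductSpace ℝ E]
    (T : E →L[ℝ] E) (M : ℝ) (hM : 0 ≤ M)
    (hsym : ∀ u w : E, ⟪u, T w⟫ = ⟪w, T u⟫)
    (hQ : ∀ v : E, |⟪v, T v⟫| ≤ M * ‖v‖ ^ 2) : ‖T‖ ≤ M := by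
  have hbil : ∀ u w : E, |⟪u, T w⟫| ≤ M / 2 * (‖u‖ ^ 2 + ‖w‖ ^ 2) := by
    intro u w
    have hpolar : ⟪u + w, T (u + w)⟫ - ⟪u - w, T (u - w)⟫ = 4 * ⟪u, T w⟫ := by
      simp only [map_add, map_sub, inner_add_left, inner_add_right, inner_sub_left,
        inner_sub_right]
      linear_combination 2 * hsym w u
    have h4 : |4 * ⟪u, T w⟫| ≤ M * ‖u + w‖ ^ 2 + M * ‖u - w‖ ^ 2 := by
      rw [← hpolar]
      refine le_trans (abs_sub _ _) ?_
      have h1 := hQ (u + w)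
      have h2 := hQ (u - w)
      linarith
    have hpar : ‖u + w‖ ^ 2 + ‖u - w‖ ^ 2 = 2 * (‖u‖ ^ 2 + ‖w‖ ^ 2) := by
      rw [norm_add_sq_real, norm_sub_sq_real]; ring
    rw [abs_mul, abs_of_nonneg (by norm_num : (0:ℝ) ≤ 4)] at h4
    nlinarith [abs_nonneg ⟪u, T w⟫]
  have hscaled : ∀ u w : E, |⟪u, T w⟫| ≤ M * ‖u‖ * ‖w‖ := by
    intro u w
    rcases eq_or_ne u 0 with rfl | hu
    · simp
    rcases eq_or_ne w 0 with rfl | hw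
    · simp
    have hupos : 0 < ‖u‖ := norm_pos_iff.2 hu
    have hwpos : 0 < ‖w‖ := norm_pos_iff.2 hw
    have h := hbil (‖w‖ • u) (‖u‖ • w)
    rw [_root_.map_smul, real_inner_smul_left, real_inner_smul_right] at h
    rw [norm_smul, norm_smul] at h
    simp only [Real.norm_eq_abs, abs_of_nonneg (norm_nonneg u), abs_of_nonneg (norm_nonneg w),
      abs_mul] at h
    have key : ‖w‖ * (‖u‖ * |⟪u, T w⟫|) ≤ M * ‖u‖ * ‖w‖ * (‖u‖ * ‖w‖) := by nlinarith
    nlinarith [key, mul_pos hupos hwpos, abs_nonneg ⟪u, T w⟫]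
  refine T.opNorm_le_bound hM fun w => ?_
  rcases eq_or_ne (T w) 0 with h0 | h0
  · rw [h0, norm_zero]; positivity
  · have h := hscaled (T w) w
    rw [real_inner_self_eq_norm_sq, abs_of_nonneg (by positivity)] at h
    have hpos : 0 < ‖T w‖ := norm_pos_iff.2 h0
    nlinarith

lemma coord_contDiff {n : ℕ} {dims : ℕ → ℕ} {d : ℕ}
    (arr : EuclideanSpace ℝ (Fin d) →ₗ[ℝ] WeightFam n dims) (j : Fin n)
    (p : Fin (dims (j.val + 1))) (q : Fin (dims j.val)) :
    ContDiff ℝ ⊤ (fun θ : EuclideanSpace ℝ (Fin d) => arr θ j p q) := by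
  let L : EuclideanSpace ℝ (Fin d) →ₗ[ℝ] ℝ :=
    { toFun := fun θ => arr θ j p q
      map_add' := by
        intro x y
        change arr (x + y) j p q = arr x j p q + arr y j p q
        rw [map_add]; rfl
      map_smul' := by
        intro c x
        change arr (c • x) j p q = c * arr x j p q
        rw [_root_.map_smul]; rfl }
  exact L.toContinuousLinearMap.contDiff
lemma segProd_entry_contDiff {n : ℕ} {dims : ℕ → ℕ} {d : ℕ}
    (arr : EuclideanSpace ℝ (Fin d) →ₗ[ℝ] WeightFam n dims) :
    ∀ b, b ≤ n → ∀ (i : Fin (dims b)) (j : Fin (dims 0)),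
      ContDiff ℝ ⊤ (fun θ : EuclideanSpace ℝ (Fin d) => segProd dims (arr θ) 0 b i j) := by
  intro b
  induction b with
  | zero => intro _ i j; exact contDiff_const
  | succ b ih =>
      intro hb i j
      have hbn : b < n := by omega
      have heq : (fun θ : EuclideanSpace ℝ (Fin d) => segProd dims (arr θ) 0 (b+1) i j) =
          fun θ => ∑ k, arr θ ⟨b, hbn⟩ i k * segProd dims (arr θ) 0 b k j := by
        funext θ
        rw [segProd_succ dims (arr θ) b hbn, Matrix.mul_apply]
      rw [heq]
      exact ContDiff.sum fun k _ => (coord_contDiff arr ⟨b, hbn⟩ i k).mul (ih (by omega) k j)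

lemma csSup_finprod {n : ℕ} (g : Fin n → ℝ) (hg : ∀ j, 0 ≤ g j) (m : ℕ) (hm : m ≤ n) :
    (∀ J : Finset (Fin n), J.card = m →
      ∏ j ∈ J, g j ≤ sSup {r : ℝ | ∃ J : Finset (Fin n), J.card = m ∧ r = ∏ j ∈ J, g j}) ∧
    0 ≤ sSup {r : ℝ | ∃ J : Finset (Fin n), J.card = m ∧ r = ∏ j ∈ J, g j} := by
  set S := {r : ℝ | ∃ J : Finset (Fin n), J.card = m ∧ r = ∏ j ∈ J, g j} with hS
  have hfin : S.Finite := by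
    have hsub : S ⊆ (fun J : Finset (Fin n) => ∏ j ∈ J, g j) '' Set.univ := by
      rintro r ⟨J, _, rfl⟩; exact ⟨J, trivial, rfl⟩
    exact Set.Finite.subset (Set.finite_univ.image _) hsub
  have hbdd : BddAbove S := hfin.bddAbove
  have hmem : ∀ J : Finset (Fin n), J.card = m → (∏ j ∈ J, g j) ∈ S := fun J hJ => ⟨J, hJ, rfl⟩
  refine ⟨fun J hJ => le_csSup hbdd (hmem J hJ), ?_⟩
  obtain ⟨J, _, hJc⟩ := Finset.exists_subset_card_eq (s := (Finset.univ : Finset (Fin n))) (n := m)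
    (by simpa using hm)
  exact le_trans (Finset.prod_nonneg fun j _ => hg j) (le_csSup hbdd (hmem J hJc))
end DLSL

open DLSL

/-- Lemma A.6 of the paper: bounds on the spectral norm of the Hessian
and the Euclidean norm of the gradient of the square-loss training loss of a deep linear
network with scalar output. -/
theorem deep_linear_square_loss_hessian_and_gradient_bounds {n d : ℕ} (hn : 2 ≤ n)
    (dims : ℕ → ℕ) (hdn : dims n = 1)
    (Lyx : Matrix (Fin (dims n)) (Fin (dims 0)) ℝ) (hLyx : frobNorm Lyx = 1)
    (arr : EuclideanSpace ℝ (Fin d) →ₗ[ℝ] WeightFam n dims)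
    (harr : Function.Bijective arr)
    (hinner : ∀ u v : EuclideanSpace ℝ (Fin d), ⟪u, v⟫ =
      ∑ j : Fin n, ∑ p : Fin (dims (j.val + 1)), ∑ q : Fin (dims j.val),
        arr u j p q * arr v j p q)
    (f : EuclideanSpace ℝ (Fin d) → ℝ)
    (hf : ∀ θ, f θ =
      1 / 2 * frobNorm (segProd dims (arr θ) 0 n - Lyx) ^ 2 + sInf (Set.range f))
    (θ : EuclideanSpace ℝ (Fin d)) :
    ‖fderiv ℝ (gradient f) θ‖ ≤
        (n : ℝ) * sSup {r : ℝ | ∃ J : Finset (Fin n), J.card = n - 1 ∧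
            r = ∏ j ∈ J, frobNorm (arr θ j) ^ 2} +
          2 * (n : ℝ) * frobNorm (segProd dims (arr θ) 0 n - Lyx) *
            sSup {r : ℝ | ∃ J : Finset (Fin n), J.card = n - 2 ∧
              r = ∏ j ∈ J, frobNorm (arr θ j)} ∧
      ‖gradient f θ‖ ≤
        Real.sqrt n * frobNorm (segProd dims (arr θ) 0 n - Lyx) *
          sSup {r : ℝ | ∃ J : Finset (Fin n), J.card = n - 1 ∧
            r = ∏ j ∈ J, frobNorm (arr θ j)} := by
  classical
  -- smoothness of f
  have hf' : f = fun ψ => 1 / 2 *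
      (∑ i, ∑ j, (segProd dims (arr ψ) 0 n i j - Lyx i j) ^ 2) + sInf (Set.range f) := by
    funext ψ
    rw [hf ψ, frobNorm_sq]
    simp only [Matrix.sub_apply]
  have hF : ContDiff ℝ ⊤ f := by
    rw [hf']
    exact (contDiff_const.mul (ContDiff.sum fun i _ => ContDiff.sum fun j _ =>
      ((segProd_entry_contDiff arr n le_rfl i j).sub contDiff_const).pow 2)).add
        contDiff_const
  have hdf : Differentiable ℝ f := hF.differentiable (by simp)
  have hf1 : ContDiff ℝ 1 (fderiv ℝ f) := hF.fderiv_right le_top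
  have hdf1 : Differentiable ℝ (fderiv ℝ f) := hf1.differentiable one_ne_zero
  have hgrad_diff : Differentiable ℝ (gradient f) :=
    ((InnerProductSpace.toDual ℝ
      (EuclideanSpace ℝ (Fin d))).symm.differentiable).comp hdf1
  set T := fderiv ℝ (gradient f) θ with hT
  -- symmetry of the Hessian
  have hsecond : ∀ v w, (fderiv ℝ (fderiv ℝ f) θ) v w = (fderiv ℝ (fderiv ℝ f) θ) w v :=
    fun v w => second_derivative_symmetric (fun y => (hdf y).hasFDerivAt)
      ((hdf1 θ).hasFDerivAt) v w
  have hTapp : ∀ w, T w =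
      (InnerProductSpace.toDual ℝ (EuclideanSpace ℝ (Fin d))).symm
        (fderiv ℝ (fderiv ℝ f) θ w) := by
    have hgfe : gradient f =
        ⇑(InnerProductSpace.toDual ℝ (EuclideanSpace ℝ (Fin d))).symm ∘ fderiv ℝ f := rfl
    intro w
    rw [hT, hgfe,
      (InnerProductSpace.toDual ℝ (EuclideanSpace ℝ (Fin d))).symm.comp_fderiv]
    rfl
  have hsymT : ∀ u w, ⟪u, T w⟫ = ⟪w, T u⟫ := by
    intro u w
    rw [hTapp w, hTapp u]
    have e1 : ⟪u, (InnerProductSpace.toDual ℝ (EuclideanSpace ℝ (Fin d))).symm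
        (fderiv ℝ (fderiv ℝ f) θ w)⟫ = (fderiv ℝ (fderiv ℝ f) θ w) u := by
      rw [real_inner_comm]; exact InnerProductSpace.toDual_symm_apply
    have e2 : ⟪w, (InnerProductSpace.toDual ℝ (EuclideanSpace ℝ (Fin d))).symm
        (fderiv ℝ (fderiv ℝ f) θ u)⟫ = (fderiv ℝ (fderiv ℝ f) θ u) w := by
      rw [real_inner_comm]; exact InnerProductSpace.toDual_symm_apply
    rw [e1, e2]
    exact hsecond w u
  -- lines
  have hline : ∀ (v : EuclideanSpace ℝ (Fin d)) (t : ℝ),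
      HasDerivAt (fun s : ℝ => θ + s • v) v t := by
    intro v t
    simpa using ((hasDerivAt_id t).smul_const v).const_add θ
  set A := segProd dims (arr θ) 0 n - Lyx with hA
  -- per-direction first and second derivatives
  have hmain : ∀ v : EuclideanSpace ℝ (Fin d),
      ⟪gradient f θ, v⟫ =
        ∑ i, ∑ j, A i j * pertProd dims (arr θ) (arr v) n 1 i j ∧
      ⟪v, T v⟫ =
        ∑ i, ∑ j, (pertProd dims (arr θ) (arr v) n 1 i j *
            pertProd dims (arr θ) (arr v) n 1 i j +
          A i j * (2 * pertProd dims (arr θ) (arr v) n 2 i j)) := by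
    intro v
    set P : ℕ → Matrix (Fin (dims n)) (Fin (dims 0)) ℝ :=
      fun k => pertProd dims (arr θ) (arr v) n k with hP
    set q : ℝ → Fin (dims n) → Fin (dims 0) → ℝ :=
      fun t i j => (∑ k ∈ Finset.range (n+1), t ^ k * P k i j) - Lyx i j with hq
    set dq : ℝ → Fin (dims n) → Fin (dims 0) → ℝ :=
      fun t i j => ∑ k ∈ Finset.range (n+1), ((k : ℝ) * t ^ (k-1)) * P k i j with hdq
    set ddq : ℝ → Fin (dims n) → Fin (dims 0) → ℝ :=
      fun t i j => ∑ k ∈ Finset.range (n+1),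
        ((k : ℝ) * (((k-1 : ℕ) : ℝ) * t ^ (k-1-1))) * P k i j with hddq
    set D : ℝ → ℝ := fun t => ∑ i, ∑ j, q t i j * dq t i j with hD
    have harrline : ∀ s : ℝ, arr (θ + s • v) = fun jj => arr θ jj + s • arr v jj := by
      intro s; rw [map_add, _root_.map_smul]; rfl
    have hexp : ∀ s : ℝ, segProd dims (arr (θ + s • v)) 0 n =
        ∑ k ∈ Finset.range (n+1), s ^ k • P k := by
      intro s; rw [harrline s]
      exact segProd_expand dims (arr θ) (arr v) s n le_rfl
    have hfline : ∀ s : ℝ, f (θ + s • v) =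
        1 / 2 * (∑ i, ∑ j, (q s i j) ^ 2) + sInf (Set.range f) := by
      intro s
      rw [hf (θ + s • v), frobNorm_sq]
      congr 2
      apply Finset.sum_congr rfl; intro i _
      apply Finset.sum_congr rfl; intro j _
      rw [Matrix.sub_apply, hexp s, Matrix.sum_apply]
      simp only [hq, Matrix.smul_apply, smul_eq_mul]
    have hqder : ∀ t i j, HasDerivAt (fun t => q t i j) (dq t i j) t := by
      intro t i j
      exact
        (HasDerivAt.fun_sum fun k _ => (hasDerivAt_pow k t).mul_const (P k i j)).sub_const _
    have hdqder : ∀ t i j, HasDerivAt (fun t => dq t i j) (ddq t i j) t := by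
      intro t i j
      exact HasDerivAt.fun_sum fun k _ =>
        ((hasDerivAt_pow (k-1) t).const_mul ((k : ℝ))).mul_const (P k i j)
    have hDer : ∀ t, HasDerivAt (fun s : ℝ => f (θ + s • v)) (D t) t := by
      intro t
      have hfun : (fun s : ℝ => f (θ + s • v)) =
          fun s : ℝ => 1 / 2 * (∑ i, ∑ j, (q s i j) ^ 2) + sInf (Set.range f) :=
        funext fun s => hfline s
      rw [hfun]
      have h := (((HasDerivAt.fun_sum (fun i (_ : i ∈ Finset.univ) =>
        HasDerivAt.fun_sum (fun j (_ : j ∈ Finset.univ) =>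
          (hqder t i j).fun_pow 2))).const_mul (1/2 : ℝ)).add_const (sInf (Set.range f)))
      have heq : (1/2 : ℝ) * (∑ i, ∑ j, 2 * q t i j ^ 1 * dq t i j) = D t := by
        rw [hD, Finset.mul_sum]
        apply Finset.sum_congr rfl; intro i _
        rw [Finset.mul_sum]
        apply Finset.sum_congr rfl; intro j _
        ring
      rw [← heq]
      exact h
    have hDder : HasDerivAt D
        (∑ i, ∑ j, (dq 0 i j * dq 0 i j + q 0 i j * ddq 0 i j)) 0 := by
      rw [hD]
      exact HasDerivAt.fun_sum fun i _ => HasDerivAt.fun_sum fun j _ =>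
        (hqder 0 i j).fun_mul (hdqder 0 i j)
    -- evaluations at 0
    have hq0 : ∀ i j, q 0 i j = A i j := by
      intro i j
      have hsum := Finset.sum_eq_single (s := Finset.range (n+1))
        (f := fun k => (0:ℝ) ^ k * P k i j) 0
        (fun b _ hb => by show (0:ℝ) ^ b * P b i j = 0; rw [zero_pow hb, zero_mul])
        (fun h => absurd (Finset.mem_range.2 (by omega)) h)
      simp only [hq]
      rw [hsum]
      simp only [pow_zero, one_mul, hP]
      rw [pertProd_zero_eq dims (arr θ) (arr v) n le_rfl, hA, Matrix.sub_apply]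
    have hdq0 : ∀ i j, dq 0 i j = P 1 i j := by
      intro i j
      have hsum := Finset.sum_eq_single (s := Finset.range (n+1))
        (f := fun k => ((k : ℝ) * (0:ℝ) ^ (k-1)) * P k i j) 1
        (fun b _ hb => by
          show ((b : ℝ) * (0:ℝ) ^ (b-1)) * P b i j = 0
          rcases Nat.eq_zero_or_pos b with rfl | hbpos
          · norm_num
          · rw [zero_pow (by omega : b - 1 ≠ 0)]; ring)
        (fun h => absurd (Finset.mem_range.2 (by omega)) h)
      simp only [hdq]
      rw [hsum]
      norm_num
    have hddq0 : ∀ i j, ddq 0 i j = 2 * P 2 i j := by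
      intro i j
      have hsum := Finset.sum_eq_single (s := Finset.range (n+1))
        (f := fun k => ((k : ℝ) * (((k-1 : ℕ) : ℝ) * (0:ℝ) ^ (k-1-1))) * P k i j) 2
        (fun b _ hb => by
          show ((b : ℝ) * (((b-1 : ℕ) : ℝ) * (0:ℝ) ^ (b-1-1))) * P b i j = 0
          rcases Nat.lt_or_ge b 2 with hb2 | hb2
          · interval_cases b <;> norm_num
          · rw [zero_pow (by omega : b - 1 - 1 ≠ 0)]; ring)
        (fun h => absurd (Finset.mem_range.2 (by omega)) h)
      simp only [hddq]
      rw [hsum]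
      norm_num
    have hzero : θ + (0:ℝ) • v = θ := by simp
    constructor
    · -- gradient formula
      have h1 : HasDerivAt (fun s : ℝ => f (θ + s • v)) (fderiv ℝ f θ v) 0 := by
        have hFD : HasFDerivAt f (fderiv ℝ f θ) (θ + (0:ℝ) • v) := by
          rw [hzero]; exact (hdf θ).hasFDerivAt
        exact hFD.comp_hasDerivAt 0 (hline v 0)
      have h2 : fderiv ℝ f θ v = D 0 := h1.unique (hDer 0)
      have h3 : ⟪gradient f θ, v⟫ = fderiv ℝ f θ v :=
        InnerProductSpace.toDual_symm_apply
      rw [h3, h2, hD]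
      apply Finset.sum_congr rfl; intro i _
      apply Finset.sum_congr rfl; intro j _
      rw [hq0 i j, hdq0 i j]
    · -- Hessian quadratic form
      have hgt : ∀ t, ⟪v, gradient f (θ + t • v)⟫ = D t := by
        intro t
        have hpt : HasDerivAt (fun s : ℝ => f (θ + s • v)) (fderiv ℝ f (θ + t • v) v) t :=
          (hdf (θ + t • v)).hasFDerivAt.comp_hasDerivAt t (hline v t)
        have h2 : fderiv ℝ f (θ + t • v) v = D t := hpt.unique (hDer t)
        rw [real_inner_comm]
        have h3 : ⟪gradient f (θ + t • v), v⟫ = fderiv ℝ f (θ + t • v) v :=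
          InnerProductSpace.toDual_symm_apply
        rw [h3, h2]
      have hg : HasDerivAt (fun t : ℝ => gradient f (θ + t • v)) (T v) 0 := by
        have hFD : HasFDerivAt (gradient f) T (θ + (0:ℝ) • v) := by
          rw [hzero, hT]; exact (hgrad_diff θ).hasFDerivAt
        exact hFD.comp_hasDerivAt 0 (hline v 0)
      have hcomp2 : HasDerivAt (fun t : ℝ => ⟪v, gradient f (θ + t • v)⟫) (⟪v, T v⟫) 0 := by
        have := (innerSL ℝ v).hasFDerivAt.comp_hasDerivAt 0 hg
        simpa [Function.comp_def] using this
      have hfun : (fun t : ℝ => ⟪v, gradient f (θ + t • v)⟫) = D := funext hgt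
      rw [hfun] at hcomp2
      have h4 : ⟪v, T v⟫ = ∑ i, ∑ j, (dq 0 i j * dq 0 i j + q 0 i j * ddq 0 i j) :=
        hcomp2.unique hDder
      rw [h4]
      apply Finset.sum_congr rfl; intro i _
      apply Finset.sum_congr rfl; intro j _
      rw [hq0 i j, hdq0 i j, hddq0 i j]
  -- quantitative bounds
  have hn1 : (1 : ℕ) ≤ n := by omega
  have hcard_univ : (Finset.univ : Finset (Fin n)).card = n := by
    rw [Finset.card_univ, Fintype.card_fin]
  have hwnn : ∀ j : Fin n, 0 ≤ frobNorm (arr θ j) := fun j => frobNorm_nonneg _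
  obtain ⟨hM1mem, hM1nn⟩ := csSup_finprod (fun j : Fin n => frobNorm (arr θ j) ^ 2)
    (fun j => by positivity) (n - 1) (by omega)
  obtain ⟨hM1'mem, hM1'nn⟩ := csSup_finprod (fun j : Fin n => frobNorm (arr θ j))
    hwnn (n - 1) (by omega)
  obtain ⟨hM2mem, hM2nn⟩ := csSup_finprod (fun j : Fin n => frobNorm (arr θ j))
    hwnn (n - 2) (by omega)
  set M1 := sSup {r : ℝ | ∃ J : Finset (Fin n), J.card = n - 1 ∧
    r = ∏ j ∈ J, frobNorm (arr θ j) ^ 2} with hM1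
  set M1' := sSup {r : ℝ | ∃ J : Finset (Fin n), J.card = n - 1 ∧
    r = ∏ j ∈ J, frobNorm (arr θ j)} with hM1'
  set M2 := sSup {r : ℝ | ∃ J : Finset (Fin n), J.card = n - 2 ∧
    r = ∏ j ∈ J, frobNorm (arr θ j)} with hM2
  have hAnn : 0 ≤ frobNorm A := frobNorm_nonneg _
  have hcard_erase : ∀ j : Fin n, ((Finset.univ : Finset (Fin n)).erase j).card = n - 1 := by
    intro j
    rw [Finset.card_erase_of_mem (Finset.mem_univ j), hcard_univ]
  have hcard_erase2 : ∀ (j k : Fin n), k ∈ (Finset.univ : Finset (Fin n)).erase j →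
      (((Finset.univ : Finset (Fin n)).erase j).erase k).card = n - 2 := by
    intro j k hk
    rw [Finset.card_erase_of_mem hk, hcard_erase j]
    omega
  -- norm of directional coefficients
  have husq : ∀ v : EuclideanSpace ℝ (Fin d),
      ∑ j : Fin n, frobNorm (arr v j) ^ 2 = ‖v‖ ^ 2 := by
    intro v
    have h := hinner v v
    rw [real_inner_self_eq_norm_sq] at h
    rw [h]
    apply Finset.sum_congr rfl; intro j _
    rw [frobNorm_sq]
    apply Finset.sum_congr rfl; intro p _
    apply Finset.sum_congr rfl; intro q _
    rw [sq]
  have hsumu : ∀ v : EuclideanSpace ℝ (Fin d),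
      ∑ j : Fin n, frobNorm (arr v j) ≤ Real.sqrt n * ‖v‖ := by
    intro v
    have h1 : (∑ j : Fin n, frobNorm (arr v j)) ^ 2 ≤
        n * ‖v‖ ^ 2 := by
      have h := sq_sum_le_card_mul_sum_sq (s := (Finset.univ : Finset (Fin n)))
        (f := fun j => frobNorm (arr v j))
      rw [husq v, hcard_univ] at h
      exact_mod_cast h
    have h2 : ∑ j : Fin n, frobNorm (arr v j) =
        Real.sqrt ((∑ j : Fin n, frobNorm (arr v j)) ^ 2) :=
      (Real.sqrt_sq (Finset.sum_nonneg fun j _ => frobNorm_nonneg _)).symm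
    rw [h2]
    calc Real.sqrt ((∑ j : Fin n, frobNorm (arr v j)) ^ 2) ≤ Real.sqrt (n * ‖v‖ ^ 2) :=
          Real.sqrt_le_sqrt h1
      _ = Real.sqrt n * ‖v‖ := by
          rw [Real.sqrt_mul (by positivity), Real.sqrt_sq (norm_nonneg v)]
  -- bounds on pertProd at level n
  have hPb : ∀ v : EuclideanSpace ℝ (Fin d),
      frobNorm (pertProd dims (arr θ) (arr v) n 1) ≤ bnd1 (arr θ) (arr v) n ∧
      frobNorm (pertProd dims (arr θ) (arr v) n 2) ≤ bnd2 (arr θ) (arr v) n / 2 := by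
    intro v
    obtain ⟨-, h1, h2⟩ := pertProd_bounds (arr θ) (arr v) n hn1 le_rfl
    exact ⟨h1, h2⟩
  have hbnd1_le : ∀ v : EuclideanSpace ℝ (Fin d),
      bnd1 (arr θ) (arr v) n ≤ M1' * ∑ j : Fin n, frobNorm (arr v j) := by
    intro v
    unfold bnd1
    rw [idxSet_top]
    calc ∑ j : Fin n, frobNorm (arr v j) * ∏ i ∈ Finset.univ.erase j, frobNorm (arr θ i)
        ≤ ∑ j : Fin n, frobNorm (arr v j) * M1' := by
          apply Finset.sum_le_sum; intro j _
          exact mul_le_mul_of_nonneg_left (hM1'mem _ (hcard_erase j)) (frobNorm_nonneg _)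
      _ = M1' * ∑ j : Fin n, frobNorm (arr v j) := by
          rw [Finset.mul_sum]; apply Finset.sum_congr rfl; intro j _; ring
  have hbnd1_sq : ∀ v : EuclideanSpace ℝ (Fin d),
      bnd1 (arr θ) (arr v) n ^ 2 ≤ ‖v‖ ^ 2 * ((n : ℝ) * M1) := by
    intro v
    unfold bnd1
    rw [idxSet_top]
    have hcs := Finset.sum_mul_sq_le_sq_mul_sq (Finset.univ : Finset (Fin n))
      (fun j => frobNorm (arr v j))
      (fun j => ∏ i ∈ Finset.univ.erase j, frobNorm (arr θ i))
    refine le_trans hcs ?_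
    rw [husq v]
    apply mul_le_mul_of_nonneg_left ?_ (by positivity)
    calc ∑ j : Fin n, (∏ i ∈ Finset.univ.erase j, frobNorm (arr θ i)) ^ 2
        = ∑ j : Fin n, ∏ i ∈ Finset.univ.erase j, frobNorm (arr θ i) ^ 2 := by
          apply Finset.sum_congr rfl; intro j _
          rw [Finset.prod_pow]
      _ ≤ ∑ _j : Fin n, M1 := by
          apply Finset.sum_le_sum; intro j _
          exact hM1mem _ (hcard_erase j)
      _ = (n : ℝ) * M1 := by
          rw [Finset.sum_const, hcard_univ, nsmul_eq_mul]
  have hbnd2_le : ∀ v : EuclideanSpace ℝ (Fin d),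
      bnd2 (arr θ) (arr v) n ≤ M2 * ((n : ℝ) * ‖v‖ ^ 2) := by
    intro v
    unfold bnd2
    rw [idxSet_top]
    have hstep : ∀ j : Fin n,
        ∑ k ∈ Finset.univ.erase j, frobNorm (arr v k) *
          ∏ i ∈ (Finset.univ.erase j).erase k, frobNorm (arr θ i) ≤
        M2 * ∑ k : Fin n, frobNorm (arr v k) := by
      intro j
      calc ∑ k ∈ Finset.univ.erase j, frobNorm (arr v k) *
            ∏ i ∈ (Finset.univ.erase j).erase k, frobNorm (arr θ i)
          ≤ ∑ k ∈ Finset.univ.erase j, frobNorm (arr v k) * M2 := by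
            apply Finset.sum_le_sum; intro k hk
            exact mul_le_mul_of_nonneg_left (hM2mem _ (hcard_erase2 j k hk))
              (frobNorm_nonneg _)
        _ ≤ ∑ k : Fin n, frobNorm (arr v k) * M2 := by
            apply Finset.sum_le_sum_of_subset_of_nonneg (Finset.subset_univ _)
            intro k _ _
            exact mul_nonneg (frobNorm_nonneg _) hM2nn
        _ = M2 * ∑ k : Fin n, frobNorm (arr v k) := by
            rw [Finset.mul_sum]; apply Finset.sum_congr rfl; intro k _; ring
    calc ∑ j : Fin n, frobNorm (arr v j) *
          ∑ k ∈ Finset.univ.erase j, frobNorm (arr v k) *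
            ∏ i ∈ (Finset.univ.erase j).erase k, frobNorm (arr θ i)
        ≤ ∑ j : Fin n, frobNorm (arr v j) * (M2 * ∑ k : Fin n, frobNorm (arr v k)) := by
          apply Finset.sum_le_sum; intro j _
          exact mul_le_mul_of_nonneg_left (hstep j) (frobNorm_nonneg _)
      _ = M2 * (∑ j : Fin n, frobNorm (arr v j)) ^ 2 := by
          rw [← Finset.sum_mul]
          ring
      _ ≤ M2 * ((n : ℝ) * ‖v‖ ^ 2) := by
          apply mul_le_mul_of_nonneg_left ?_ hM2nn
          have h := sq_sum_le_card_mul_sum_sq (s := (Finset.univ : Finset (Fin n)))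
            (f := fun j => frobNorm (arr v j))
          rw [husq v, hcard_univ] at h
          exact_mod_cast h
  -- the two conclusions
  constructor
  · -- Hessian bound
    refine opNorm_le_of_quadratic T _ ?_ hsymT ?_
    · have hnn : (0:ℝ) ≤ (n:ℝ) := by positivity
      have h1 := mul_nonneg hnn hM1nn
      have h2 := mul_nonneg (mul_nonneg (by positivity : (0:ℝ) ≤ 2 * (n:ℝ)) hAnn) hM2nn
      nlinarith
    intro v
    rw [(hmain v).2]
    obtain ⟨hP1, hP2⟩ := hPb v
    have hsplit : ∑ i, ∑ j, (pertProd dims (arr θ) (arr v) n 1 i j *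
          pertProd dims (arr θ) (arr v) n 1 i j +
        A i j * (2 * pertProd dims (arr θ) (arr v) n 2 i j)) =
        (∑ i, ∑ j, pertProd dims (arr θ) (arr v) n 1 i j *
          pertProd dims (arr θ) (arr v) n 1 i j) +
        2 * ∑ i, ∑ j, A i j * pertProd dims (arr θ) (arr v) n 2 i j := by
      rw [Finset.mul_sum, ← Finset.sum_add_distrib]
      apply Finset.sum_congr rfl; intro i _
      rw [Finset.mul_sum, ← Finset.sum_add_distrib]
      apply Finset.sum_congr rfl; intro j _
      ring
    rw [hsplit]
    have hS1 : ∑ i, ∑ j, pertProd dims (arr θ) (arr v) n 1 i j *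
        pertProd dims (arr θ) (arr v) n 1 i j =
        frobNorm (pertProd dims (arr θ) (arr v) n 1) ^ 2 := by
      rw [frobNorm_sq]
      apply Finset.sum_congr rfl; intro i _
      apply Finset.sum_congr rfl; intro j _
      rw [sq]
    have hS1le : frobNorm (pertProd dims (arr θ) (arr v) n 1) ^ 2 ≤
        ‖v‖ ^ 2 * ((n : ℝ) * M1) := by
      refine le_trans (pow_le_pow_left₀ (frobNorm_nonneg _) hP1 2) (hbnd1_sq v)
    have hS2le : |∑ i, ∑ j, A i j * pertProd dims (arr θ) (arr v) n 2 i j| ≤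
        frobNorm A * (M2 * ((n : ℝ) * ‖v‖ ^ 2) / 2) := by
      refine le_trans (frob_inner_abs_le A _) ?_
      apply mul_le_mul_of_nonneg_left ?_ hAnn
      refine le_trans hP2 ?_
      have := hbnd2_le v
      linarith
    rw [hS1]
    have habs := abs_add_le (frobNorm (pertProd dims (arr θ) (arr v) n 1) ^ 2)
      (2 * ∑ i, ∑ j, A i j * pertProd dims (arr θ) (arr v) n 2 i j)
    rw [abs_of_nonneg (by positivity : (0:ℝ) ≤
      frobNorm (pertProd dims (arr θ) (arr v) n 1) ^ 2), abs_mul] at habs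
    have h2 : |(2:ℝ)| = 2 := by norm_num
    rw [h2] at habs
    refine le_trans habs ?_
    have hfinal : frobNorm (pertProd dims (arr θ) (arr v) n 1) ^ 2 +
        2 * |∑ i, ∑ j, A i j * pertProd dims (arr θ) (arr v) n 2 i j| ≤
        ‖v‖ ^ 2 * ((n : ℝ) * M1) + 2 * (frobNorm A * (M2 * ((n : ℝ) * ‖v‖ ^ 2) / 2)) := by
      linarith [hS1le, hS2le]
    refine le_trans hfinal ?_
    have hp : (0:ℝ) ≤ (n:ℝ) * frobNorm A * M2 * ‖v‖ ^ 2 :=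
      mul_nonneg (mul_nonneg (mul_nonneg (by positivity) hAnn) hM2nn) (sq_nonneg _)
    linarith only [hp]
  · -- gradient bound
    set g := gradient f θ with hg
    have h1 : ‖g‖ ^ 2 = ⟪g, g⟫ := (real_inner_self_eq_norm_sq g).symm
    have h2 := (hmain g).1
    have h3 : ‖g‖ ^ 2 ≤ frobNorm A * (M1' * (Real.sqrt n * ‖g‖)) := by
      rw [h1, h2]
      refine le_trans (le_abs_self _) ?_
      refine le_trans (frob_inner_abs_le A _) ?_
      apply mul_le_mul_of_nonneg_left ?_ hAnn
      refine le_trans (hPb g).1 ?_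
      refine le_trans (hbnd1_le g) ?_
      exact mul_le_mul_of_nonneg_left (hsumu g) hM1'nn
    rcases eq_or_ne g 0 with h0 | h0
    · rw [h0, norm_zero]
      exact mul_nonneg (mul_nonneg (Real.sqrt_nonneg _) hAnn) hM1'nn
    · have hgpos : 0 < ‖g‖ := norm_pos_iff.2 h0
      have h4 : ‖g‖ * ‖g‖ ≤ (Real.sqrt n * frobNorm A * M1') * ‖g‖ := by
        calc ‖g‖ * ‖g‖ = ‖g‖ ^ 2 := (sq ‖g‖).symm
          _ ≤ frobNorm A * (M1' * (Real.sqrt n * ‖g‖)) := h3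
          _ = (Real.sqrt n * frobNorm A * M1') * ‖g‖ := by ring
      exact le_of_mul_le_mul_right h4 hgpos
end
end
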